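/- arXiv:2506.23865 — 7 statements merged into one kernel-verified Lean document; each statement's English description precedes it below -/
import Mathlib

section
/- Let (S,*) be an adequate partial semigroup, let r be an idempotent ultrafilter in J(S), and let R : P_f(𝓕) → r be any function (i.e., R(F) ∈ r for every F ∈ P_f(𝓕)). Then there exist functions m* : P_f(𝓕) → ℕ, α with α(F) ∈ S^{m*(F)+1} for each F ∈ P_f(𝓕), and τ with τ(F) ∈ 𝓙_{m*(F)} for each F ∈ P_f(𝓕), such that: (1) if F, G ∈ P_f(𝓕) and G ⊊ F, then τ(G)(m*(G)) < τ(F)(1); and (2) if s ∈ ℕ, G_1 ⊊ G_2 ⊊ … ⊊ G_s are members of P_f(𝓕), and f_i ∈ G_i for each i ∈ {1,…,s}, then ∏_{i=1}^{s} ((∏_{j=1}^{m*(G_i)} α(G_i)(j) * f_i(τ(G_i)(j))) * α(G_i)(m*(G_i)+1)) is defined and belongs to R(G_1). -/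
open scoped Classical

namespace PSG

variable {S : Type}

/-- A partial binary operation: `op a b = some c` means the product is defined and equals `c`.
Associativity: `(a*b)*c = a*(b*c)` in the sense that either side is defined iff the other is,
and then they are equal. -/
def IsPSemigroup (op : S → S → Option S) : Prop :=
  ∀ a b c : S, ((op a b).bind fun x => op x c) = ((op b c).bind fun y => op a y)

/-- commutativity: `a*b = b*a` whenever either side is defined. -/
def IsComm (op : S → S → Option S) : Prop := ∀ a b : S, op a b = op b a

/-- `φ(s) = {t : s*t is defined}` -/
def phiSet (op : S → S → Option S) (s : S) : Set S := {t | (op s t).isSome}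

/-- `σ(H) = ⋂_{s ∈ H} φ(s)` -/
def sigmaSet (op : S → S → Option S) (H : Finset S) : Set S := {t | ∀ s ∈ H, (op s t).isSome}

/-- `s⁻¹A = {t ∈ φ(s) : s*t ∈ A}` -/
def sInv (op : S → S → Option S) (s : S) (A : Set S) : Set S :=
  {t | ∃ v, op s t = some v ∧ v ∈ A}

/-- `(S,*)` is adequate: `σ(H) ≠ ∅` for all `H ∈ P_f(S)`. -/
def IsAdequate (op : S → S → Option S) : Prop :=
  ∀ H : Finset S, H.Nonempty → (sigmaSet op H).Nonempty

/-- sequence a list of options: `some` of the list of values iff all are defined. -/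
def seqO {α : Type*} : List (Option α) → Option (List α)
  | [] => some []
  | x :: l => x.bind fun a => (seqO l).map fun r => a :: r

/-- the product of a list of elements, in order; undefined for the empty list. -/
def oprod (op : S → S → Option S) : List S → Option S
  | [] => none
  | [a] => some a
  | a :: b :: l => (oprod op (b :: l)).bind fun x => op a x

/-- the product of a list of partially-defined elements. -/
def oprodO (op : S → S → Option S) (l : List (Option S)) : Option S :=
  (seqO l).bind (oprod op)

/-- `∏_{t ∈ H} f(t)`, the product in increasing order of indices. -/
def finProd (op : S → S → Option S) (f : ℕ → S) (H : Finset ℕ) : Option S :=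
  oprod op ((H.sort (· ≤ ·)).map f)

/-- `f` is an adequate sequence in `(S,*)`. -/
def IsAdequateSeq (op : S → S → Option S) (f : ℕ → S) : Prop :=
  (∀ H : Finset ℕ, H.Nonempty → (finProd op f H).isSome) ∧
  (∀ F : Finset S, F.Nonempty → ∃ m : ℕ, ∀ H : Finset ℕ, H.Nonempty → (∀ t ∈ H, m ≤ t) →
    ∀ x : S, finProd op f H = some x → x ∈ sigmaSet op F)

/-- `F ∈ P_f(𝓕)`: a nonempty finite set of adequate sequences. -/
def MemPfF (op : S → S → Option S) (F : Finset (ℕ → S)) : Prop :=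
  F.Nonempty ∧ ∀ f ∈ F, IsAdequateSeq op f

/-- `(∏_{i=1}^m a(i)*b(i)) * a(m+1)` -/
def jProd (op : S → S → Option S) {m : ℕ} (a : Fin (m + 1) → S) (b : Fin m → S) : Option S :=
  oprodO op ((List.ofFn fun j : Fin m => op (a j.castSucc) (b j)) ++ [some (a (Fin.last m))])

/-- `A` is a J-set in `(S,*)`. -/
def IsJSet (op : S → S → Option S) (A : Set S) : Prop :=
  ∀ F : Finset (ℕ → S), MemPfF op F → ∀ L : Finset S, L.Nonempty →
    ∃ m : ℕ, 0 < m ∧ ∃ (a : Fin (m + 1) → S) (t : Fin m → ℕ), StrictMono t ∧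
      ∀ f ∈ F, ∃ x : S, jProd op a (fun j => f (t j)) = some x ∧ x ∈ A ∧ x ∈ sigmaSet op L

/-- `p ∈ δS`, i.e. `φ(x) ∈ p` for every `x ∈ S` (equivalently `p ∈ ⋂_x cl_{βS} φ(x)`). -/
def InDelta (op : S → S → Option S) (p : Ultrafilter S) : Prop := ∀ x : S, phiSet op x ∈ p

/-- the collection of sets constituting the product `p*q` of ultrafilters:
`A ∈ p*q ↔ {a : a⁻¹A ∈ q} ∈ p`. -/
def preMul (op : S → S → Option S) (p q : Ultrafilter S) : Set (Set S) :=
  {A : Set S | {a : S | sInv op a A ∈ q} ∈ p}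

/-- `p` is an idempotent: `p*p = p` (as collections of sets). -/
def IsIdem (op : S → S → Option S) (p : Ultrafilter S) : Prop :=
  ∀ A : Set S, A ∈ p ↔ A ∈ preMul op p p

/-- `mul` realizes the semigroup operation of `δS`: whenever `q ∈ δS`,
`mul p q` is the ultrafilter `p*q`. -/
def MulCompat (op : S → S → Option S) (mul : Ultrafilter S → Ultrafilter S → Ultrafilter S) :
    Prop :=
  ∀ p q : Ultrafilter S, InDelta op q → ∀ A : Set S, A ∈ mul p q ↔ A ∈ preMul op p q

/-- a (two-sided) ideal of `(δS,*)`. -/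
def IsIdealK (op : S → S → Option S) (mul : Ultrafilter S → Ultrafilter S → Ultrafilter S)
    (I : Set (Ultrafilter S)) : Prop :=
  I.Nonempty ∧ (∀ p ∈ I, InDelta op p) ∧
  (∀ p : Ultrafilter S, InDelta op p → ∀ q ∈ I, mul p q ∈ I) ∧
  (∀ q ∈ I, ∀ p : Ultrafilter S, InDelta op p → mul q p ∈ I)

/-- `K(δS)`, the smallest two-sided ideal of `δS` (= the intersection of all two-sided ideals). -/
def KSet (op : S → S → Option S) (mul : Ultrafilter S → Ultrafilter S → Ultrafilter S) :
    Set (Ultrafilter S) := ⋂₀ {I | IsIdealK op mul I}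

/-- `A` is piecewise syndetic: `cl_{βS}(A) ∩ K(δS) ≠ ∅`. -/
def IsPWSyndetic (op : S → S → Option S) (mul : Ultrafilter S → Ultrafilter S → Ultrafilter S)
    (A : Set S) : Prop := ∃ p : Ultrafilter S, A ∈ p ∧ p ∈ KSet op mul

/-- `A` is syndetic: `σ(H) ⊆ ⋃_{t∈H} t⁻¹A` for some `H ∈ P_f(S)`. -/
def IsSyndetic (op : S → S → Option S) (A : Set S) : Prop :=
  ∃ H : Finset S, H.Nonempty ∧ sigmaSet op H ⊆ ⋃ t ∈ H, sInv op t A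

/-! ### sums in `S ∪ {0}` (`Option S` with `none` playing the role of the adjoined identity `0`) -/

/-- the partial operation on `S ∪ {0}`, with `0 = none` the identity. -/
def zop (op : S → S → Option S) : Option S → Option S → Option (Option S)
  | none, y => some y
  | some a, none => some (some a)
  | some a, some b => (op a b).map some

/-- sum of a list of elements of `S ∪ {0}`; the empty sum is `0`. -/
def zsum (op : S → S → Option S) (l : List (Option S)) : Option (Option S) :=
  l.foldr (fun x acc => acc.bind fun y => zop op x y) (some none)

/-- sum of a finite family of elements of `S ∪ {0}`. -/
noncomputable def zsumFinset (op : S → S → Option S) {γ : Type*} (A : Finset γ) (g : γ → Option S) :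
    Option (Option S) := zsum op (A.toList.map g)

/-- the members of `F_d` (nonempty, of cardinality at most `d`) contained in `α`. -/
def fdSubsets (d : ℕ) (α : Finset ℕ) : Finset (Finset ℕ) :=
  α.powerset.filter fun γ => γ.Nonempty ∧ γ.card ≤ d

/-- `⟨m_γ⟩_{γ ∈ F_d}` generates `⟨v_α⟩` (on indices `α` satisfying `P`):
`v_α = Σ_{γ ⊆ α, γ ∈ F_d} m_γ`, all the sums being defined (and lying in `S`, not `0`). -/
def GeneratesVIP (op : S → S → Option S) (P : Finset ℕ → Prop) (d : ℕ)
    (m : Finset ℕ → Option S) (v : Finset ℕ → S) : Prop :=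
  ∀ α : Finset ℕ, α.Nonempty → P α →
    zsumFinset op (fdSubsets d α) m = some (some (v α))

/-- `⟨v_α⟩` (indexed by the `α` satisfying `P`) is a VIP system. -/
def IsVIP (op : S → S → Option S) (P : Finset ℕ → Prop) (v : Finset ℕ → S) : Prop :=
  ∃ d : ℕ, 0 < d ∧ ∃ m : Finset ℕ → Option S, GeneratesVIP op P d m v

/-- `{⟨v_α^{(i)}⟩ : i ∈ ι}` is an adequate set of VIP systems (indexed by the `α` with `P α`). -/
def IsAdequateVIPFamily {ι : Type*} (op : S → S → Option S) (P : Finset ℕ → Prop)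
    (v : ι → Finset ℕ → S) : Prop :=
  ∃ d t : ℕ, 0 < d ∧ 0 < t ∧
  ∃ (m : ι → Finset ℕ → Option S) (n : Fin t → Finset ℕ → Option S) (E : ι → Finset (Fin t)),
    (∀ i : ι, GeneratesVIP op P d (m i) (v i)) ∧
    (∀ j : Fin t, ∃ u : Finset ℕ → S, GeneratesVIP op P d (n j) u) ∧
    (∀ H : Finset S, H.Nonempty → ∃ M : ℕ, ∀ l : ℕ, 0 < l → ∀ γ : Fin l → Finset ℕ,
      Function.Injective γ → (∀ j, (γ j).Nonempty ∧ (γ j).card ≤ d) →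
      (∀ j, ¬ γ j ⊆ Finset.Iic M) →
      ∃ x : Option S,
        zsumFinset op (Finset.univ : Finset (Fin t × Fin l)) (fun ij => n ij.1 (γ ij.2))
          = some x ∧
        (x = none ∨ ∃ s : S, x = some s ∧ s ∈ sigmaSet op H)) ∧
    (∀ i : ι, ∀ γ : Finset ℕ, γ.Nonempty → γ.card ≤ d →
      zsumFinset op (E i) (fun j => n j γ) = some (m i γ))

/-- `𝓐` is an adequately partition regular family of subsets of `S`. -/
def AdequatelyPR (op : S → S → Option S) (𝓐 : Set (Set S)) : Prop :=
  ∀ H : Finset S, H.Nonempty → ∀ r : ℕ, 0 < r →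
    ∃ F : Finset S, ↑F ⊆ sigmaSet op H ∧
      ∀ C : Fin r → Set S, (↑F : Set S) ⊆ (⋃ j, C j) → ∃ j, ∃ A ∈ 𝓐, A ⊆ C j

/-- `𝓐` is shift invariant: `A + x ∈ 𝓐` for `A ∈ 𝓐`, `x ∈ σ(A)`. -/
def ShiftInvariant (op : S → S → Option S) (𝓐 : Set (Set S)) : Prop :=
  ∀ A ∈ 𝓐, ∀ x : S, (∀ a ∈ A, (op a x).isSome) →
    {y : S | ∃ a ∈ A, op a x = some y} ∈ 𝓐

end PSG

/-!
By recursion on `|F|`, choose at each `F ∈ P_f(𝓕)` a block `(m*(F), α(F), τ(F))` together with a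
set `B(F) ∈ r`. Put `A(F) = R(F) ∩ ⋂_{G ⊊ F} B(G) ∈ r`. Since `r` is idempotent,
`A(F)⋆ = {x ∈ A(F) : x⁻¹A(F) ∈ r}` is in `r`, hence a J-set; applied to the sequences of `F`
shifted beyond every `τ(G)`, `G ⊊ F`, it yields a block whose value `x_f` at each `f ∈ F` lies in
`A(F)⋆`, and we set `B(F) = ⋂_{f ∈ F} x_f⁻¹A(F)`. Along a chain `G₁ ⊊ ⋯ ⊊ G_s` the product `z`
is then defined, lies in `R(G₁)`, and satisfies `B(G_s) ⊆ z⁻¹R(G₁)`: the next factor `x` lies in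
`A(G_{s+1}) ⊆ B(G_s)`, and `x⁻¹(z⁻¹R(G₁)) = (z * x)⁻¹R(G₁)`.
-/

namespace PSG

variable {S : Type} {op : S → S → Option S}

theorem seqO_append_singleton {l : List (Option S)} {xs : List S} (h : seqO l = some xs)
    (x : S) : seqO (l ++ [some x]) = some (xs ++ [x]) := by
  induction l generalizing xs with
  | nil => cases h; rfl
  | cons y l ih =>
    cases y with
    | none => cases h
    | some a =>
      obtain ⟨ys, hys, rfl⟩ := Option.map_eq_some_iff.1 h
      simp [seqO, ih hys]

theorem oprod_append_singleton (hps : IsPSemigroup op) (a x : S) (l : List S) :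
    oprod op ((a :: l) ++ [x]) = (oprod op (a :: l)).bind fun z => op z x := by
  induction l generalizing a with
  | nil => rfl
  | cons b l ih =>
    change (oprod op ((b :: l) ++ [x])).bind (op a) = _
    rw [ih, oprod]
    cases oprod op (b :: l) with
    | none => rfl
    | some w => exact (hps a w x).symm

theorem oprodO_append_singleton (hps : IsPSemigroup op) {l : List (Option S)} {z : S}
    (h : oprodO op l = some z) (x : S) : oprodO op (l ++ [some x]) = op z x := by
  obtain ⟨xs, hxs, hz⟩ := Option.bind_eq_some_iff.1 h
  cases xs with
  | nil => cases hz
  | cons a xs =>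
    rw [oprodO, seqO_append_singleton hxs, Option.bind_some, oprod_append_singleton hps, hz,
      Option.bind_some]

theorem finProd_comp_add (f : ℕ → S) (c : ℕ) (H : Finset ℕ) :
    finProd op (fun k => f (k + c)) H = finProd op f (H.map (addRightEmbedding c)) := by
  rw [finProd, finProd, ← Finset.map_sort _ _ (· ≤ ·) (· ≤ ·) fun a _ b _ => by simp, List.map_map]
  rfl

theorem IsAdequateSeq.comp_add {f : ℕ → S} (hf : IsAdequateSeq op f) (c : ℕ) :
    IsAdequateSeq op fun k => f (k + c) := by
  refine ⟨fun H hH => ?_, fun F hF => ?_⟩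
  · rw [finProd_comp_add]
    exact hf.1 _ hH.map
  · obtain ⟨m, hm⟩ := hf.2 F hF
    refine ⟨m, fun H hH hHm x hx => hm _ hH.map ?_ x (finProd_comp_add f c H ▸ hx)⟩
    simp only [Finset.mem_map, addRightEmbedding_apply]
    rintro _ ⟨t, ht, rfl⟩
    have := hHm t ht
    omega

theorem sInv_mono {x : S} {A B : Set S} (h : A ⊆ B) : sInv op x A ⊆ sInv op x B :=
  fun _ ⟨v, hv, hvA⟩ => ⟨v, hv, h hvA⟩

theorem sInv_sInv (hps : IsPSemigroup op) {z x v : S} (hzx : op z x = some v) (A : Set S) :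
    sInv op x (sInv op z A) = sInv op v A := by
  have hv : ∀ u, op v u = (op x u).bind (op z) := fun u => by
    simpa [hzx] using hps z x u
  ext u
  simp only [sInv, Set.mem_ofPred_eq, hv, Option.bind_eq_some_iff]
  exact ⟨fun ⟨y, hy, w, hw, hwA⟩ => ⟨w, ⟨y, hy, hw⟩, hwA⟩,
    fun ⟨w, ⟨y, hy, hw⟩, hwA⟩ => ⟨y, hy, w, hw, hwA⟩⟩

/-- The data chosen at `F ∈ P_f(𝓕)`: `m*(F)`, `α(F)`, `τ(F)`, and a set `B ∈ r` from which the
values of the blocks at every `F' ⊋ F` are drawn. -/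
structure Stage (S : Type) where
  m : ℕ
  α : Fin (m + 1) → S
  τ : Fin m → ℕ
  B : Set S

def Stage.eval (op : S → S → Option S) (d : Stage S) (f : ℕ → S) : Option S :=
  jProd op d.α fun j => f (d.τ j)

def stageTarget (R : Finset (ℕ → S) → Set S) (F : Finset (ℕ → S))
    (prev : {G // G ⊂ F} → Stage S) : Set S :=
  R F ∩ ⋂ G, (prev G).B

/-- Outside `P_f(𝓕)` only `B ∈ r` is required, so that `stageTarget` may intersect over all
proper subsets. -/
structure IsGoodStage (op : S → S → Option S) (r : Ultrafilter S) (R : Finset (ℕ → S) → Set S)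
    (F : Finset (ℕ → S)) (prev : {G // G ⊂ F} → Stage S) (d : Stage S) : Prop where
  B_mem : d.B ∈ r
  m_pos : MemPfF op F → 0 < d.m
  τ_strictMono : MemPfF op F → StrictMono d.τ
  τ_lt : MemPfF op F → ∀ G j j', (prev G).τ j < d.τ j'
  eval_mem : MemPfF op F → ∀ f ∈ F, ∃ x, d.eval op f = some x ∧ x ∈ stageTarget R F prev ∧
    d.B ⊆ sInv op x (stageTarget R F prev)

instance [Nonempty S] : Nonempty (Stage S) :=
  ⟨⟨0, fun _ => Classical.arbitrary S, Fin.elim0, Set.univ⟩⟩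

variable {r : Ultrafilter S} {R : Finset (ℕ → S) → Set S}

theorem exists_isGoodStage [Nonempty S] (hridem : IsIdem op r) (hrJ : ∀ A ∈ r, IsJSet op A)
    (hR : ∀ F, MemPfF op F → R F ∈ r) (F : Finset (ℕ → S)) (prev : {G // G ⊂ F} → Stage S)
    (hprev : ∀ G, (prev G).B ∈ r) : ∃ d, IsGoodStage op r R F prev d := by
  by_cases hF : MemPfF op F
  swap
  · exact ⟨{ Classical.arbitrary (Stage S) with B := Set.univ }, Filter.univ_mem,
      hF.elim, hF.elim, hF.elim, hF.elim⟩
  set A := stageTarget R F prev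
  have hA : A ∈ r := Filter.inter_mem (hR F hF) (Filter.iInter_mem.2 hprev)
  -- the blocks at `F` are taken beyond every index used below `F`
  obtain ⟨c, hc⟩ := Finite.bddAbove_range
    fun p : Σ G : {G // G ⊂ F}, Fin (prev G).m => (prev p.1).τ p.2
  have hF' : MemPfF op (F.image fun f k => f (k + (c + 1))) := by
    refine ⟨hF.1.image _, ?_⟩
    simp only [Finset.mem_image, forall_exists_index, and_imp, forall_apply_eq_imp_iff₂]
    exact fun f hf => (hF.2 f hf).comp_add _
  obtain ⟨f₀, -⟩ := hF.1
  obtain ⟨m, hm, α, t, ht, hall⟩ := hrJ _ (Filter.inter_mem hA ((hridem A).1 hA)) _ hF'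
    {f₀ 0} (Finset.singleton_nonempty _)
  have hblock : ∀ f ∈ F, ∃ x, jProd op α (fun j => f (t j + (c + 1))) = some x ∧ x ∈ A ∧
      sInv op x A ∈ r := fun f hf => by
    obtain ⟨x, hx, hxA, -⟩ := hall _ (Finset.mem_image_of_mem _ hf)
    exact ⟨x, hx, hxA⟩
  choose! x hx hxA hxr using hblock
  refine ⟨⟨m, α, fun j => t j + (c + 1), ⋂ f ∈ F, sInv op (x f) A⟩,
    (Filter.biInter_finset_mem F).2 hxr, fun _ => hm,
    fun _ i j hij => Nat.add_lt_add_right (ht hij) _, fun _ G j j' => ?_,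
    fun _ f hf => ⟨x f, hx f hf, hxA f hf, Set.biInter_subset_of_mem hf⟩⟩
  have : (prev G).τ j ≤ c := hc ⟨⟨G, j⟩, rfl⟩
  dsimp only
  omega

noncomputable def stages [Nonempty S] (op : S → S → Option S) (r : Ultrafilter S)
    (R : Finset (ℕ → S) → Set S) (F : Finset (ℕ → S)) : Stage S :=
  Classical.epsilon (IsGoodStage op r R F fun G : {G // G ⊂ F} => stages op r R G.1)
termination_by F.card
decreasing_by exact Finset.card_lt_card G.2

theorem isGoodStage_stages [Nonempty S] (hridem : IsIdem op r) (hrJ : ∀ A ∈ r, IsJSet op A)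
    (hR : ∀ F, MemPfF op F → R F ∈ r) (F : Finset (ℕ → S)) :
    IsGoodStage op r R F (fun G => stages op r R G.1) (stages op r R F) := by
  induction F using Finset.strongInduction with
  | H F ih =>
    rw [stages]
    exact Classical.epsilon_spec
      (exists_isGoodStage hridem hrJ hR F _ fun G => (ih G.1 G.2).B_mem)

theorem exists_chain_prod (hps : IsPSemigroup op) {D : Finset (ℕ → S) → Stage S}
    (hD : ∀ F, IsGoodStage op r R F (fun G => D G.1) (D F)) {s : ℕ}
    (G : Fin (s + 1) → Finset (ℕ → S)) (hG : StrictMono G) (hGv : ∀ i, MemPfF op (G i))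
    (f : Fin (s + 1) → ℕ → S) (hf : ∀ i, f i ∈ G i) :
    ∃ z, oprodO op (List.ofFn fun i => (D (G i)).eval op (f i)) = some z ∧ z ∈ R (G 0) ∧
      (D (G (Fin.last s))).B ⊆ sInv op z (R (G 0)) := by
  induction s with
  | zero =>
    obtain ⟨x, hx, hxA, hB⟩ := (hD (G 0)).eval_mem (hGv 0) (f 0) (hf 0)
    exact ⟨x, by simp [hx, oprodO, seqO, oprod], hxA.1, hB.trans (sInv_mono Set.inter_subset_left)⟩
  | succ s ih =>
    obtain ⟨z, hz, hzR, hzB⟩ := ih (fun i => G i.castSucc) (hG.comp Fin.strictMono_castSucc)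
      (fun i => hGv _) (fun i => f i.castSucc) (fun i => hf _)
    obtain ⟨x, hx, hxA, hB⟩ := (hD (G (Fin.last _))).eval_mem (hGv _) _ (hf _)
    have hB' : stageTarget R (G (Fin.last (s + 1))) (fun H => D H.1) ⊆
        (D (G (Fin.last s).castSucc)).B :=
      fun y hy => Set.mem_iInter.1 hy.2 ⟨_, hG (Fin.castSucc_lt_last _)⟩
    obtain ⟨v, hv, hvR⟩ := hzB (hB' hxA)
    refine ⟨v, ?_, hvR, ?_⟩
    · rw [List.ofFn_succ', List.concat_eq_append, hx, oprodO_append_singleton hps hz, hv]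
    · rw [← sInv_sInv hps hv]
      exact hB.trans (sInv_mono (hB'.trans hzB))

end PSG

open PSG in
theorem generalized_CST_partial_semigroups_general {S : Type}
    (op : S → S → Option S)
    (hps : IsPSemigroup op)
    (r : Ultrafilter S) (hrJ : ∀ A ∈ r, IsJSet op A)
    (hridem : IsIdem op r)
    (R : Finset (ℕ → S) → Set S)
    (hR : ∀ F : Finset (ℕ → S), MemPfF op F → R F ∈ r) :
    ∃ (mstar : Finset (ℕ → S) → ℕ)
      (α : (F : Finset (ℕ → S)) → Fin (mstar F + 1) → S)
      (τ : (F : Finset (ℕ → S)) → Fin (mstar F) → ℕ),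
      (∀ F, MemPfF op F → 0 < mstar F ∧ StrictMono (τ F)) ∧
      (∀ F G, MemPfF op F → MemPfF op G → G ⊂ F →
        ∀ (j : Fin (mstar G)) (j' : Fin (mstar F)), τ G j < τ F j') ∧
      (∀ s : ℕ, ∀ hs : 0 < s, ∀ G : Fin s → Finset (ℕ → S),
        (∀ i, MemPfF op (G i)) → (∀ i j : Fin s, i < j → G i ⊂ G j) →
        ∀ f : Fin s → ℕ → S, (∀ i, f i ∈ G i) →
        ∃ x : S,
          oprodO op (List.ofFn fun i : Fin s =>
            jProd op (α (G i)) (fun j => f i (τ (G i) j))) = some x ∧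
          x ∈ R (G ⟨0, hs⟩)) := by
  have : Nonempty S := Filter.nonempty_of_neBot (r : Filter S)
  have hD := isGoodStage_stages (op := op) hridem hrJ hR
  refine ⟨fun F => (stages op r R F).m, fun F => (stages op r R F).α,
    fun F => (stages op r R F).τ, fun F hF => ⟨(hD F).m_pos hF, (hD F).τ_strictMono hF⟩,
    fun F G hF _ hGF => (hD F).τ_lt hF ⟨G, hGF⟩, ?_⟩
  rintro (_ | s) hs G hGv hGc f hf
  · exact absurd hs (lt_irrefl 0)
  · obtain ⟨x, hx, hxR, -⟩ := exists_chain_prod hps hD G hGc hGv f hf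
    exact ⟨x, hx, hxR⟩

open PSG in
/-- Further generalization of Phulara's Central Sets Theorem for arbitrary adequate partial
semigroups: `r` an idempotent in `J(S)`, `R : P_f(𝓕) → r`. -/
theorem generalized_CST_partial_semigroups {S : Type}
    (op : S → S → Option S)
    (hps : IsPSemigroup op) (hadq : IsAdequate op)
    (r : Ultrafilter S) (hrdelta : InDelta op r) (hrJ : ∀ A ∈ r, IsJSet op A)
    (hridem : IsIdem op r)
    (R : Finset (ℕ → S) → Set S)
    (hR : ∀ F : Finset (ℕ → S), MemPfF op F → R F ∈ r) :
    ∃ (mstar : Finset (ℕ → S) → ℕ)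
      (α : (F : Finset (ℕ → S)) → Fin (mstar F + 1) → S)
      (τ : (F : Finset (ℕ → S)) → Fin (mstar F) → ℕ),
      (∀ F, MemPfF op F → 0 < mstar F ∧ StrictMono (τ F)) ∧
      (∀ F G, MemPfF op F → MemPfF op G → G ⊂ F →
        ∀ (j : Fin (mstar G)) (j' : Fin (mstar F)), τ G j < τ F j') ∧
      (∀ s : ℕ, ∀ hs : 0 < s, ∀ G : Fin s → Finset (ℕ → S),
        (∀ i, MemPfF op (G i)) → (∀ i j : Fin s, i < j → G i ⊂ G j) →
        ∀ f : Fin s → ℕ → S, (∀ i, f i ∈ G i) →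
        ∃ x : S,
          oprodO op (List.ofFn fun i : Fin s =>
            jProd op (α (G i)) (fun j => f i (τ (G i) j))) = some x ∧
          x ∈ R (G ⟨0, hs⟩)) :=
  generalized_CST_partial_semigroups_general op hps r hrJ hridem R hR
end

section
/- Let (S,*) be a commutative adequate partial semigroup, let r be an idempotent ultrafilter in J(S), and let R : P_f(𝓕) → r be any function (i.e., R(F) ∈ r for every F ∈ P_f(𝓕)). Then there exist functions γ : P_f(𝓕) → S and H : P_f(𝓕) → P_f(ℕ) such that: (1) if F, G ∈ P_f(𝓕) and G ⊊ F, then max H(G) < min H(F); and (2) if n ∈ ℕ, G_1 ⊊ G_2 ⊊ … ⊊ G_n are members of P_f(𝓕), and f_i ∈ G_i for each i ∈ {1,…,n}, then ∏_{i=1}^{n} (γ(G_i) * ∏_{t∈H(G_i)} f_i(t)) is defined and belongs to R(G_1). -/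
open scoped Classical

/-!
Adjoin to `S` an absorbing element standing for "undefined", and then an identity. Associativity
and commutativity of the partial operation make this a commutative monoid, in which all the
partial products of the statement become ordinary finite products that may be freely rearranged.

`γ` and `H` are then chosen by recursion along `⊊`. At stage `F`, every chain `G₀ ⊊ ⋯ ⊊ Gₖ ⊊ F`
(there are finitely many) has, by induction, a product `z` in `R(G₀)⋆ = {x ∈ R(G₀) : x⁻¹R(G₀) ∈ r}`.
Since `r` is idempotent, the set `B` of `y ∈ R(F)⋆` with `z * y ∈ R(G₀)⋆` for all these chains
is in `r`, hence is a J-set. Its defining property, applied to the members of `F` shifted beyond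
all the earlier `H(G)`, yields `γ(F)` and `H(F)` with `γ(F) * ∏_{t ∈ H(F)} f(t) ∈ B` for every
`f ∈ F`.
-/

namespace PSG

variable {S : Type} {op : S → S → Option S}

/-- `Option S` with `none` (undefined) absorbing; a semigroup when `op` is associative. -/
def WithUndef (_op : S → S → Option S) : Type := Option S

namespace WithUndef

instance : Mul (WithUndef op) := ⟨fun x y : Option S => x.bind fun a => y.bind fun b => op a b⟩

instance [Fact (IsPSemigroup op)] [Fact (IsComm op)] : CommSemigroup (WithUndef op) where
  mul_assoc x y z := by
    rcases x with _ | a <;> rcases y with _ | b <;> rcases z with _ | c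
    all_goals try rfl
    · change (op a b).bind (fun _ => none) = none
      cases op a b <;> rfl
    · exact Fact.out (p := IsPSemigroup op) a b c
  mul_comm x y := by
    rcases x with _ | a <;> rcases y with _ | b
    all_goals try rfl
    exact Fact.out (p := IsComm op) a b

end WithUndef

abbrev TotalMonoid (op : S → S → Option S) : Type := WithOne (WithUndef op)

def ofOption (op : S → S → Option S) (x : Option S) : TotalMonoid op :=
  WithOne.coe (α := WithUndef op) x

theorem ofOption_injective : Function.Injective (ofOption op) :=
  fun _ _ h => WithOne.coe_inj.mp h

theorem ofOption_op (a b : S) :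
    ofOption op (op a b) = ofOption op (some a) * ofOption op (some b) := rfl

theorem ofOption_bind_op (x : Option S) (a : S) :
    ofOption op (x.bind (op a)) = ofOption op (some a) * ofOption op x := rfl

theorem ofOption_none_mul (z : TotalMonoid op) : ofOption op none * z = ofOption op none := by
  induction z using WithOne.recOneCoe <;> rfl

theorem ofOption_mul_none (x : Option S) :
    ofOption op x * ofOption op none = ofOption op none := by
  cases x <;> rfl

theorem exists_mul_ofOption_eq (z : TotalMonoid op) (x : Option S) :
    ∃ y, z * ofOption op x = ofOption op y := by
  induction z using WithOne.recOneCoe with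
  | one => exact ⟨x, one_mul _⟩
  | coe w => exact ⟨w * show WithUndef op from x, rfl⟩

theorem oprod_cons {l : List S} (hl : l ≠ []) (a : S) :
    oprod op (a :: l) = (oprod op l).bind (op a) := by
  cases l
  · contradiction
  · rfl

theorem ofOption_oprod : ∀ l : List S, l ≠ [] →
    ofOption op (oprod op l) = (l.map fun a => ofOption op (some a)).prod
  | [a], _ => (List.prod_singleton).symm
  | a :: b :: l, _ => by
    rw [oprod_cons (List.cons_ne_nil b l), ofOption_bind_op, ofOption_oprod (b :: l) (by simp)]
    simp only [List.map_cons, List.prod_cons]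

theorem seqO_cons_ne_some_nil (x : Option S) (L : List (Option S)) :
    seqO (x :: L) ≠ some [] := by
  cases x <;> cases seqO L <;> simp [seqO, *]

theorem ofOption_oprodO_cons (x : Option S) {L : List (Option S)} (hL : L ≠ []) :
    ofOption op (oprodO op (x :: L)) = ofOption op x * ofOption op (oprodO op L) := by
  rcases x with _ | a
  · exact (ofOption_none_mul _).symm
  cases h : seqO L with
  | none => simp [oprodO, seqO, h, ofOption_mul_none]
  | some l =>
    have hl : l ≠ [] := by
      rintro rfl
      obtain ⟨y, L', rfl⟩ := List.exists_cons_of_ne_nil hL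
      exact seqO_cons_ne_some_nil y L' h
    simp only [oprodO, seqO, h, Option.bind_some, Option.map_some]
    rw [oprod_cons hl, ofOption_bind_op]

theorem ofOption_oprodO : ∀ L : List (Option S), L ≠ [] →
    ofOption op (oprodO op L) = (L.map (ofOption op)).prod
  | [x], _ => by cases x <;> simp [oprodO, seqO, oprod]
  | x :: y :: L, _ => by
    rw [ofOption_oprodO_cons x (List.cons_ne_nil y L), ofOption_oprodO (y :: L) (by simp)]
    simp only [List.map_cons, List.prod_cons]

theorem MemPfF.image_comp_add {F : Finset (ℕ → S)} (hF : MemPfF op F) (c : ℕ) :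
    MemPfF op (F.image fun f k => f (k + c)) := by
  refine ⟨hF.1.image _, fun g hg => ?_⟩
  obtain ⟨f, hf, rfl⟩ := Finset.mem_image.mp hg
  exact (hF.2 f hf).comp_add c

def starSet (op : S → S → Option S) (r : Ultrafilter S) (A : Set S) : Set S :=
  {x | x ∈ A ∧ sInv op x A ∈ r}

section StarSet

variable {r : Ultrafilter S} {A : Set S}

theorem starSet_mem (hridem : IsIdem op r) (hA : A ∈ r) : starSet op r A ∈ r :=
  Filter.inter_mem hA ((hridem A).mp hA)

theorem sInv_starSet_mem (hps : IsPSemigroup op) (hridem : IsIdem op r) {x : S}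
    (hx : x ∈ starSet op r A) : sInv op x (starSet op r A) ∈ r := by
  refine Filter.mem_of_superset (starSet_mem hridem hx.2) ?_
  rintro y ⟨⟨v, hv, hvA⟩, hyinv⟩
  refine ⟨v, hv, hvA, Filter.mem_of_superset hyinv ?_⟩
  rintro s ⟨w, hw, u, hu, huA⟩
  refine ⟨u, ?_, huA⟩
  have hassoc := hps x y s
  rw [hv, Option.bind_some, hw, Option.bind_some] at hassoc
  rw [hassoc, hu]

end StarSet

def DefinedIn (z : TotalMonoid op) (A : Set S) : Prop := ∃ x ∈ A, z = ofOption op (some x)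

theorem setOf_definedIn_mul_eq_sInv (x : S) (A : Set S) :
    {y | DefinedIn (ofOption op (some x) * ofOption op (some y)) A} = sInv op x A := by
  ext y
  simp only [Set.mem_ofPred_eq, DefinedIn, ← ofOption_op, ofOption_injective.eq_iff, sInv]
  exact ⟨fun ⟨w, hw, h⟩ => ⟨w, h, hw⟩, fun ⟨w, h, hw⟩ => ⟨w, hw, h⟩⟩

def IsChainSel {n : ℕ} (op : S → S → Option S) (G : Fin n → Finset (ℕ → S))
    (f : Fin n → ℕ → S) : Prop :=
  (∀ i, MemPfF op (G i)) ∧ StrictMono G ∧ ∀ i, f i ∈ G i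

theorem IsChainSel.castSucc {k : ℕ} {G : Fin (k + 1) → Finset (ℕ → S)}
    {f : Fin (k + 1) → ℕ → S} (h : IsChainSel op G f) :
    IsChainSel op (fun i => G i.castSucc) (fun i => f i.castSucc) :=
  ⟨fun _ => h.1 _, h.2.1.comp Fin.strictMono_castSucc, fun _ => h.2.2 _⟩

theorem IsChainSel.subset_last {k : ℕ} {G : Fin (k + 1) → Finset (ℕ → S)}
    {f : Fin (k + 1) → ℕ → S} (h : IsChainSel op G f) (i : Fin (k + 1)) :
    G i ⊆ G (Fin.last k) :=
  h.2.1.monotone (Fin.le_last i)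

section Construction

variable [Fact (IsPSemigroup op)] [Fact (IsComm op)]

theorem ofOption_finProd (f : ℕ → S) {H : Finset ℕ} (hH : H.Nonempty) :
    ofOption op (finProd op f H) = ∏ t ∈ H, ofOption op (some (f t)) := by
  rw [finProd, ofOption_oprod _ (List.ne_nil_of_length_pos (by simpa using hH.card_pos)),
    List.map_map, ((H.sort_perm_toList _).map _).prod_eq, Finset.prod_map_toList]
  rfl

theorem ofOption_jProd {m : ℕ} (a : Fin (m + 1) → S) (b : Fin m → S) :
    ofOption op (jProd op a b) =
      (∏ i, ofOption op (some (a i))) * ∏ j, ofOption op (some (b j)) := by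
  rw [jProd, ofOption_oprodO _ (by simp), List.map_append, List.prod_append, List.map_ofFn,
    List.prod_ofFn, Fin.prod_univ_castSucc]
  simp only [Function.comp_def, ofOption_op, Finset.prod_mul_distrib, List.map_cons,
    List.map_nil, List.prod_singleton]
  exact mul_right_comm _ _ _

theorem exists_prod_eq_ofOption_some {m : ℕ} (a : Fin (m + 1) → S) {z : TotalMonoid op} {x : S}
    (h : (∏ i, ofOption op (some (a i))) * z = ofOption op (some x)) :
    ∃ g, ∏ i, ofOption op (some (a i)) = ofOption op (some g) := by
  rw [Fin.prod_univ_castSucc] at h ⊢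
  obtain ⟨_ | g, hg⟩ := exists_mul_ofOption_eq (∏ i : Fin m, ofOption op (some (a i.castSucc)))
    (some (a (Fin.last m)))
  · rw [hg, ofOption_none_mul] at h
    exact absurd (ofOption_injective h) (Option.some_ne_none x).symm
  · exact ⟨g, hg⟩

variable (op) in
def entry (p : S × Finset ℕ) (f : ℕ → S) : TotalMonoid op :=
  ofOption op (some p.1) * ∏ t ∈ p.2, ofOption op (some (f t))

/-- Apply the J-set property to the sequences shifted by `c`; commutativity collects the `a(i)`
of `(∏ a(i) * f(t(i))) * a(m+1)` into `γ`. -/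
theorem IsJSet.exists_entry {B : Set S} (hB : IsJSet op B) {F : Finset (ℕ → S)}
    (hF : MemPfF op F) (c : ℕ) :
    ∃ p : S × Finset ℕ, p.2.Nonempty ∧ (∀ t ∈ p.2, c ≤ t) ∧
      ∀ f ∈ F, DefinedIn (entry op p f) B := by
  obtain ⟨f₀, hf₀⟩ := hF.1
  obtain ⟨m, hm, a, t, ht, hJ⟩ :=
    hB _ (hF.image_comp_add c) {f₀ 0} (Finset.singleton_nonempty _)
  have hJ' : ∀ f ∈ F, ∃ x ∈ B, (∏ i, ofOption op (some (a i))) *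
      ∏ j, ofOption op (some (f (t j + c))) = ofOption op (some x) := by
    intro f hf
    obtain ⟨x, hx, hxB, -⟩ := hJ _ (Finset.mem_image_of_mem _ hf)
    exact ⟨x, hxB, by rw [← ofOption_jProd, hx]⟩
  obtain ⟨g, hg⟩ := exists_prod_eq_ofOption_some a (hJ' f₀ hf₀).choose_spec.2
  refine ⟨(g, Finset.univ.image fun j => t j + c),
    ⟨_, Finset.mem_image_of_mem _ (Finset.mem_univ ⟨0, hm⟩)⟩, by simp, fun f hf => ?_⟩
  obtain ⟨x, hxB, hx⟩ := hJ' f hf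
  refine ⟨x, hxB, ?_⟩
  rw [entry, ← hg, ← hx, Finset.prod_image fun i _ j _ h => ht.injective (by simpa using h)]

variable (op) in
/-- `v F` encodes the pair `(γ(F), H(F))`. -/
def chainProd {n : ℕ} (v : Finset (ℕ → S) → S × Finset ℕ) (G : Fin n → Finset (ℕ → S))
    (f : Fin n → ℕ → S) : TotalMonoid op :=
  ∏ i, entry op (v (G i)) (f i)

variable {v : Finset (ℕ → S) → S × Finset ℕ}

theorem chainProd_congr {n : ℕ} {v' : Finset (ℕ → S) → S × Finset ℕ}
    {G : Fin n → Finset (ℕ → S)} (h : ∀ i, v (G i) = v' (G i)) (f : Fin n → ℕ → S) :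
    chainProd op v G f = chainProd op v' G f := by
  simp only [chainProd, h]

theorem ofOption_oprodO_ofFn_eq_chainProd {n : ℕ} {G : Fin (n + 1) → Finset (ℕ → S)}
    {f : Fin (n + 1) → ℕ → S} (hne : ∀ i, (v (G i)).2.Nonempty) :
    ofOption op (oprodO op (List.ofFn fun i =>
      (finProd op (f i) (v (G i)).2).bind fun w => op (v (G i)).1 w)) = chainProd op v G f := by
  rw [ofOption_oprodO _ (by simp), List.map_ofFn, List.prod_ofFn]
  refine Finset.prod_congr rfl fun i _ => ?_
  rw [Function.comp_apply, ofOption_bind_op, ofOption_finProd _ (hne i)]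
  rfl

variable (op) (r : Ultrafilter S) (R : Finset (ℕ → S) → Set S)

/-- Passing from `R(G₀)` to the star set `R(G₀)⋆` is what allows chains to be extended. -/
def GoodAt (v : Finset (ℕ → S) → S × Finset ℕ) (F : Finset (ℕ → S)) : Prop :=
  MemPfF op F →
    (v F).2.Nonempty ∧ (∀ G ⊂ F, ∀ x ∈ (v G).2, ∀ y ∈ (v F).2, x < y) ∧
    ∀ (k : ℕ) (G : Fin (k + 1) → Finset (ℕ → S)) (f : Fin (k + 1) → ℕ → S),
      IsChainSel op G f → G (Fin.last k) = F →
        DefinedIn (chainProd op v G f) (starSet op r (R (G 0)))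

def prefixProducts (v : Finset (ℕ → S) → S × Finset ℕ) (F : Finset (ℕ → S)) :
    Set (TotalMonoid op × Finset (ℕ → S)) :=
  {q | ∃ (k : ℕ) (G : Fin (k + 1) → Finset (ℕ → S)) (f : Fin (k + 1) → ℕ → S),
    IsChainSel op G f ∧ G (Fin.last k) ⊂ F ∧ q = (chainProd op v G f, G 0)}

/-- The member of `r` whose J-set property produces `v F`. -/
def stageSet (v : Finset (ℕ → S) → S × Finset ℕ) (F : Finset (ℕ → S)) : Set S :=
  starSet op r (R F) ∩ ⋂ q ∈ prefixProducts op v F,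
    {y | DefinedIn (q.1 * ofOption op (some y)) (starSet op r (R q.2))}

variable {op r R} {F : Finset (ℕ → S)}

theorem goodAt_congr {v' : Finset (ℕ → S) → S × Finset ℕ} (h : ∀ G ⊆ F, v G = v' G)
    (hv : GoodAt op r R v F) : GoodAt op r R v' F := by
  intro hF
  obtain ⟨hne, hlt, hchain⟩ := hv hF
  rw [← h F subset_rfl]
  refine ⟨hne, fun G hG => h G hG.subset ▸ hlt G hG, fun k G f hGf hlast => ?_⟩
  rw [← chainProd_congr fun i => h _ (hlast ▸ hGf.subset_last i)]
  exact hchain k G f hGf hlast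

theorem prefixProducts_finite (v : Finset (ℕ → S) → S × Finset ℕ) (F : Finset (ℕ → S)) :
    (prefixProducts op v F).Finite := by
  refine (Set.finite_iUnion fun k : Fin (2 ^ F.card) => Set.finite_range
    fun c : Fin (k + 1) → F.powerset × F =>
      (chainProd op v (fun i => ((c i).1 : Finset (ℕ → S))) (fun i => ((c i).2 : ℕ → S)),
        ((c 0).1 : Finset (ℕ → S)))).subset ?_
  rintro _ ⟨k, G, f, hGf, hlast, rfl⟩
  have hsub : ∀ i, G i ⊆ F := fun i => (hGf.subset_last i).trans hlast.subset
  have hk : k + 1 ≤ 2 ^ F.card := by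
    simpa using Finset.card_le_card_of_injOn G (s := Finset.univ) (t := F.powerset)
      (fun i _ => Finset.mem_powerset.2 (hsub i)) hGf.2.1.injective.injOn
  exact Set.mem_iUnion.2 ⟨⟨k, hk⟩,
    fun i => (⟨G i, Finset.mem_powerset.2 (hsub i)⟩, ⟨f i, hsub i (hGf.2.2 i)⟩), rfl⟩

theorem stageSet_mem (hridem : IsIdem op r) (hRF : R F ∈ r)
    (hv : ∀ G ⊂ F, GoodAt op r R v G) : stageSet op r R v F ∈ r := by
  refine Filter.inter_mem (starSet_mem hridem hRF)
    ((Filter.biInter_mem (prefixProducts_finite v F)).2 ?_)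
  rintro _ ⟨k, G, f, hGf, hlast, rfl⟩
  obtain ⟨x, hx, hxz⟩ := (hv _ hlast (hGf.1 _)).2.2 k G f hGf rfl
  rw [hxz, setOf_definedIn_mul_eq_sInv]
  exact sInv_starSet_mem Fact.out hridem hx

theorem definedIn_chainProd_update {p : S × Finset ℕ}
    (hp : ∀ f ∈ F, DefinedIn (entry op p f) (stageSet op r R v F))
    {k : ℕ} {G : Fin (k + 1) → Finset (ℕ → S)} {f : Fin (k + 1) → ℕ → S}
    (hGf : IsChainSel op G f) (hlast : G (Fin.last k) = F) :
    DefinedIn (chainProd op (Function.update v F p) G f) (starSet op r (R (G 0))) := by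
  obtain ⟨x, ⟨hxF, hxprefix⟩, hx⟩ := hp (f (Fin.last k)) (hlast ▸ hGf.2.2 _)
  have hlt : ∀ i : Fin k, G i.castSucc ⊂ F := fun i => hlast ▸ hGf.2.1 (Fin.castSucc_lt_last i)
  rw [chainProd, Fin.prod_univ_castSucc, hlast, Function.update_self, hx]
  simp only [Function.update_of_ne (hlt _).ne]
  cases k with
  | zero => exact ⟨x, hlast ▸ hxF, one_mul _⟩
  | succ k => exact Set.mem_iInter₂.1 hxprefix _ ⟨k, _, _, hGf.castSucc, hlt (Fin.last k), rfl⟩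

theorem exists_goodAt_update (hridem : IsIdem op r) (hrJ : ∀ A ∈ r, IsJSet op A)
    (hR : ∀ F, MemPfF op F → R F ∈ r) (hF : MemPfF op F) (hv : ∀ G ⊂ F, GoodAt op r R v G) :
    ∃ p, GoodAt op r R (Function.update v F p) F := by
  set N := F.powerset.sup fun G => (v G).2.sup id
  obtain ⟨p, hpne, hpN, hp⟩ :=
    (hrJ _ (stageSet_mem hridem (hR F hF) hv)).exists_entry hF (N + 1)
  refine ⟨p, fun _ => ⟨?_, fun G hG x hx y hy => ?_,
    fun k G f hGf hlast => definedIn_chainProd_update hp hGf hlast⟩⟩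
  · rwa [Function.update_self]
  · rw [Function.update_of_ne hG.ne] at hx
    rw [Function.update_self] at hy
    have hxN : x ≤ N := (Finset.le_sup (f := id) hx).trans
      (Finset.le_sup (f := fun G => (v G).2.sup id) (Finset.mem_powerset.2 hG.subset))
    exact hxN.trans_lt (hpN y hy)

variable (op r R) in
/-- `greedy F` makes the function good at `F`, given its values on the proper subsets of `F`,
whenever that is possible at all. -/
noncomputable def greedy [Nonempty S] (F : Finset (ℕ → S)) : S × Finset ℕ :=
  Classical.epsilon fun p => GoodAt op r R (fun G => if G ⊂ F then greedy G else p) F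
termination_by F.card
decreasing_by exact Finset.card_lt_card ‹_›

theorem greedy_goodAt [Nonempty S] (hridem : IsIdem op r) (hrJ : ∀ A ∈ r, IsJSet op A)
    (hR : ∀ F, MemPfF op F → R F ∈ r) (F : Finset (ℕ → S)) :
    GoodAt op r R (greedy op r R) F := by
  induction F using Finset.strongInduction with
  | H F ih =>
    let extend (p : S × Finset ℕ) (G : Finset (ℕ → S)) :=
      if G ⊂ F then greedy op r R G else p
    have h_extend : ∀ p, ∀ G ⊆ F, extend p G = Function.update (greedy op r R) F p G := by
      intro p G hG
      by_cases hGF : G = F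
      · subst hGF
        simp [extend]
      · simp [extend, Finset.ssubset_iff_subset_ne.2 ⟨hG, hGF⟩, hGF]
    have hex : ∃ p, GoodAt op r R (extend p) F := by
      by_cases hF : MemPfF op F
      · obtain ⟨p, hp⟩ := exists_goodAt_update hridem hrJ hR hF ih
        exact ⟨p, goodAt_congr (fun G hG => (h_extend p G hG).symm) hp⟩
      · exact ⟨Classical.arbitrary _, fun h => absurd h hF⟩
    refine goodAt_congr (fun G hG => ?_) (Classical.epsilon_spec hex)
    rw [h_extend _ G hG]
    rcases eq_or_ne G F with rfl | hGF
    · rw [Function.update_self, greedy]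
    · exact Function.update_of_ne hGF _ _

end Construction

end PSG

open PSG in
theorem generalized_CST_commutative_partial_semigroups_general {S : Type}
    (op : S → S → Option S)
    (hps : IsPSemigroup op) (hcomm : IsComm op)
    (r : Ultrafilter S) (hrJ : ∀ A ∈ r, IsJSet op A)
    (hridem : IsIdem op r)
    (R : Finset (ℕ → S) → Set S)
    (hR : ∀ F : Finset (ℕ → S), MemPfF op F → R F ∈ r) :
    ∃ (γ : Finset (ℕ → S) → S) (H : Finset (ℕ → S) → Finset ℕ),
      (∀ F, MemPfF op F → (H F).Nonempty) ∧
      (∀ F G, MemPfF op F → MemPfF op G → G ⊂ F → ∀ x ∈ H G, ∀ y ∈ H F, x < y) ∧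
      (∀ n : ℕ, ∀ hn : 0 < n, ∀ G : Fin n → Finset (ℕ → S),
        (∀ i, MemPfF op (G i)) → (∀ i j : Fin n, i < j → G i ⊂ G j) →
        ∀ f : Fin n → ℕ → S, (∀ i, f i ∈ G i) →
        ∃ x : S,
          oprodO op (List.ofFn fun i : Fin n =>
            (finProd op (f i) (H (G i))).bind fun w => op (γ (G i)) w) = some x ∧
          x ∈ R (G ⟨0, hn⟩)) := by
  have : Fact (IsPSemigroup op) := ⟨hps⟩
  have : Fact (IsComm op) := ⟨hcomm⟩
  have : Nonempty S := ⟨(r.nonempty_of_mem Filter.univ_mem).some⟩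
  have hgood := greedy_goodAt hridem hrJ hR
  refine ⟨fun F => (greedy op r R F).1, fun F => (greedy op r R F).2,
    fun F hF => (hgood F hF).1, fun F G hF _ hGF => (hgood F hF).2.1 G hGF, ?_⟩
  rintro (_ | k) hn G hG hchain f hf
  · exact absurd hn (lt_irrefl 0)
  obtain ⟨x, hx, hprod⟩ := (hgood _ (hG (Fin.last k))).2.2 k G f ⟨hG, hchain, hf⟩ rfl
  refine ⟨x, ofOption_injective (op := op) ?_, hx.1⟩
  rw [ofOption_oprodO_ofFn_eq_chainProd fun i => (hgood _ (hG i)).1, hprod]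

open PSG in
/-- Further generalization of Phulara's Central Sets Theorem for commutative adequate partial
semigroups. -/
theorem generalized_CST_commutative_partial_semigroups {S : Type}
    (op : S → S → Option S)
    (hps : IsPSemigroup op) (hcomm : IsComm op) (hadq : IsAdequate op)
    (r : Ultrafilter S) (hrdelta : InDelta op r) (hrJ : ∀ A ∈ r, IsJSet op A)
    (hridem : IsIdem op r)
    (R : Finset (ℕ → S) → Set S)
    (hR : ∀ F : Finset (ℕ → S), MemPfF op F → R F ∈ r) :
    ∃ (γ : Finset (ℕ → S) → S) (H : Finset (ℕ → S) → Finset ℕ),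
      (∀ F, MemPfF op F → (H F).Nonempty) ∧
      (∀ F G, MemPfF op F → MemPfF op G → G ⊂ F → ∀ x ∈ H G, ∀ y ∈ H F, x < y) ∧
      (∀ n : ℕ, ∀ hn : 0 < n, ∀ G : Fin n → Finset (ℕ → S),
        (∀ i, MemPfF op (G i)) → (∀ i j : Fin n, i < j → G i ⊂ G j) →
        ∀ f : Fin n → ℕ → S, (∀ i, f i ∈ G i) →
        ∃ x : S,
          oprodO op (List.ofFn fun i : Fin n =>
            (finProd op (f i) (H (G i))).bind fun w => op (γ (G i)) w) = some x ∧
          x ∈ R (G ⟨0, hn⟩)) :=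
  generalized_CST_commutative_partial_semigroups_general op hps hcomm r hrJ hridem R hR
end

section
/- Let (S,*) be an adequate partial semigroup, let p ∈ δS be an idempotent (p*p = p), let A ∈ p, and set A* = {x ∈ A : x⁻¹A ∈ p}. Then for every x ∈ A*, x⁻¹(A*) ∈ p. -/
open scoped Classical

/-! Associativity turns `t⁻¹(x⁻¹A)` into `(x*t)⁻¹A`. Hence, with `B = x⁻¹A ∈ p`, every `t ∈ B`
with `t⁻¹B ∈ p` lies in `x⁻¹(A*)`, and idempotence of `p` puts `{t : t⁻¹B ∈ p}` in `p`. -/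

namespace PSG

variable {S : Type} {op : S → S → Option S}

theorem sInv_sInv_of_op_eq_some (hps : IsPSemigroup op) {x t v : S} (hxt : op x t = some v)
    (A : Set S) : sInv op t (sInv op x A) = sInv op v A := by
  ext u
  have hassoc := hps x t u
  rw [hxt, Option.bind_some] at hassoc
  constructor
  · rintro ⟨w, htu, z, hxw, hzA⟩
    exact ⟨z, by rw [hassoc, htu, Option.bind_some, hxw], hzA⟩
  · rintro ⟨z, hz, hzA⟩
    obtain ⟨w, htu, hxw⟩ := Option.bind_eq_some_iff.mp (hassoc ▸ hz)
    exact ⟨w, htu, z, hxw, hzA⟩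

end PSG

open PSG in
theorem star_lemma_general {S : Type}
    (op : S → S → Option S) (hps : IsPSemigroup op)
    (p : Ultrafilter S) (hpidem : IsIdem op p)
    (A : Set S)
    (x : S) (hx : x ∈ {y ∈ A | sInv op y A ∈ p}) :
    sInv op x {y ∈ A | sInv op y A ∈ p} ∈ p := by
  obtain ⟨-, hxinv⟩ := hx
  have hsub : sInv op x A ∩ {t | sInv op t (sInv op x A) ∈ p}
      ⊆ sInv op x {y ∈ A | sInv op y A ∈ p} := by
    rintro t ⟨⟨v, hxt, hvA⟩, ht⟩
    exact ⟨v, hxt, hvA, sInv_sInv_of_op_eq_some hps hxt A ▸ ht⟩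
  exact Filter.mem_of_superset (Filter.inter_mem hxinv ((hpidem _).mp hxinv)) hsub

open PSG in
/-- For an idempotent `p ∈ δS`, `A ∈ p` and `x ∈ A* = {x ∈ A : x⁻¹A ∈ p}`,
we have `x⁻¹(A*) ∈ p`. -/
theorem star_lemma {S : Type}
    (op : S → S → Option S) (hps : IsPSemigroup op) (hadq : IsAdequate op)
    (p : Ultrafilter S) (hpdelta : InDelta op p) (hpidem : IsIdem op p)
    (A : Set S) (hA : A ∈ p)
    (x : S) (hx : x ∈ {y ∈ A | sInv op y A ∈ p}) :
    sInv op x {y ∈ A | sInv op y A ∈ p} ∈ p :=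
  star_lemma_general op hps p hpidem A x hx
end

section
/- Let (S,*) be an adequate partial semigroup and let A ⊆ S. Then A is syndetic if and only if there exists H ∈ P_f(S) such that δS ⊆ ⋃_{t∈H} cl_{βS}(t⁻¹A). -/
open scoped Classical

/-!
If `A` is not syndetic, then for every `H ∈ P_f(S)` some point of `σ(H)` lies outside
`⋃_{t∈H} t⁻¹A`. These witness sets decrease as `H` grows, so they generate a proper filter,
and any ultrafilter refining it lies in `δS` and misses every `t⁻¹A` with `t ∈ H`.
Conversely, every `p ∈ δS` contains `σ(H)`, hence one of the finitely many sets `t⁻¹A`.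
-/

open Filter

namespace PSG

variable {S : Type} {op : S → S → Option S}

theorem sigmaSet_eq_biInter (H : Finset S) : sigmaSet op H = ⋂ s ∈ H, phiSet op s := by
  ext t
  simp [sigmaSet, phiSet]

theorem sigmaSet_anti : Antitone (sigmaSet op) :=
  fun _ _ hHH' _ ht s hs => ht s (hHH' hs)

theorem sigmaSet_mem_of_inDelta {p : Ultrafilter S} (hp : InDelta op p) (H : Finset S) :
    sigmaSet op H ∈ p := by
  rw [sigmaSet_eq_biInter]
  exact (biInter_mem H.finite_toSet).2 fun s _ => hp s

theorem exists_sInv_mem_of_sigmaSet_subset {A : Set S} {H : Finset S}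
    (hH : sigmaSet op H ⊆ ⋃ t ∈ H, sInv op t A) {p : Ultrafilter S} (hp : InDelta op p) :
    ∃ t ∈ H, sInv op t A ∈ p :=
  (Ultrafilter.finite_biUnion_mem_iff H.finite_toSet).1 <|
    mem_of_superset (sigmaSet_mem_of_inDelta hp H) hH

def syndeticGap (op : S → S → Option S) (A : Set S) (H : Finset S) : Set S :=
  sigmaSet op H \ ⋃ t ∈ H, sInv op t A

theorem syndeticGap_anti (A : Set S) : Antitone (syndeticGap op A) :=
  fun _ _ hHH' =>
    Set.sdiff_subset_sdiff (sigmaSet_anti hHH') (Set.biUnion_subset_biUnion_left hHH')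

theorem syndeticGap_nonempty {A : Set S} (hA : ¬ IsSyndetic op A) {H : Finset S}
    (hH : H.Nonempty) : (syndeticGap op A H).Nonempty :=
  Set.sdiff_nonempty.2 fun hsub => hA ⟨H, hH, hsub⟩

theorem exists_inDelta_forall_sInv_notMem {A : Set S} (hA : ¬ IsSyndetic op A) {H : Finset S}
    (hH : H.Nonempty) : ∃ p : Ultrafilter S, InDelta op p ∧ ∀ t ∈ H, sInv op t A ∉ p := by
  set f : Filter S := ⨅ F : Finset S, 𝓟 (syndeticGap op A (H ∪ F))
  have hf : f.NeBot := by
    refine iInf_neBot_of_directed' (Antitone.directed_ge fun F F' hFF' => ?_) fun F => ?_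
    · exact principal_mono.2 (syndeticGap_anti A (Finset.union_subset_union_right hFF'))
    · exact principal_neBot_iff.2 (syndeticGap_nonempty hA (hH.mono Finset.subset_union_left))
  have hgap : ∀ F, syndeticGap op A (H ∪ F) ∈ Ultrafilter.of f := fun F =>
    Ultrafilter.of_le f (mem_iInf_of_mem F (mem_principal_self _))
  refine ⟨Ultrafilter.of f, fun x => ?_, fun t ht hmem => ?_⟩
  · refine mem_of_superset (hgap {x}) fun y hy => hy.1 x ?_
    simp
  · obtain ⟨y, hy, hyA⟩ := Ultrafilter.nonempty_of_mem (inter_mem (hgap ∅) hmem)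
    exact hy.2 (Set.mem_biUnion (Finset.subset_union_left ht) hyA)

end PSG

open PSG in
theorem syndetic_iff_general {S : Type}
    (op : S → S → Option S)
    (A : Set S) :
    IsSyndetic op A ↔
      ∃ H : Finset S, H.Nonempty ∧
        ∀ p : Ultrafilter S, InDelta op p → ∃ t ∈ H, sInv op t A ∈ p := by
  constructor
  · rintro ⟨H, hH, hsub⟩
    exact ⟨H, hH, fun p hp => exists_sInv_mem_of_sigmaSet_subset hsub hp⟩
  · rintro ⟨H, hH, hcover⟩
    by_contra hA
    obtain ⟨p, hp, hmiss⟩ := exists_inDelta_forall_sInv_notMem hA hH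
    obtain ⟨t, ht, htp⟩ := hcover p hp
    exact hmiss t ht htp

open PSG in
/-- `A` is syndetic iff `δS ⊆ ⋃_{t ∈ H} cl_{βS}(t⁻¹A)` for some `H ∈ P_f(S)`. -/
theorem syndetic_iff {S : Type}
    (op : S → S → Option S) (hps : IsPSemigroup op) (hadq : IsAdequate op)
    (A : Set S) :
    IsSyndetic op A ↔
      ∃ H : Finset S, H.Nonempty ∧
        ∀ p : Ultrafilter S, InDelta op p → ∃ t ∈ H, sInv op t A ∈ p :=
  syndetic_iff_general op A
end

section
/- Let (S,+) be a commutative adequate partial semigroup and let 𝓐 be a shift-invariant, adequately partition regular family of finite subsets of S. Let E ⊆ S be piecewise syndetic. Then E contains a member of 𝓐. -/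
open scoped Classical

/-
The ultrafilters `q ∈ δS` every member of which contains a member of `𝓐` form a two-sided
ideal of `δS`, hence contain `K(δS)`. For the left ideal property, a member of `r + q` has the
form `-a + A ∈ q`, and shifting a member of `𝓐` inside it by `a` lands in `A` (commutativity).
For the right ideal property, if `A₀ ∈ 𝓐` lies in `{a : -a + A ∈ r}`, then the finitely many
sets `-a + A`, `a ∈ A₀`, have a common point `t`, and `A₀ + t ⊆ A`. The ideal is nonempty:
adequate partition regularity implies that the sets `φ(x)` together with the complements
of sets containing no member of `𝓐` have the finite intersection property.
-/

namespace PSG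

variable {S : Type} {op : S → S → Option S} {𝓐 : Set (Set S)}

def ContainsMember (𝓐 : Set (Set S)) (A : Set S) : Prop := ∃ A₀ ∈ 𝓐, A₀ ⊆ A

theorem sigmaSet_union (op : S → S → Option S) (H₁ H₂ : Finset S) :
    sigmaSet op (H₁ ∪ H₂) = sigmaSet op H₁ ∩ sigmaSet op H₂ := by
  ext t
  simp only [sigmaSet, Finset.mem_union, Set.mem_ofPred_eq, Set.mem_inter_iff]
  exact ⟨fun h => ⟨fun s hs => h s (.inl hs), fun s hs => h s (.inr hs)⟩,
    fun h s hs => hs.elim (h.1 s) (h.2 s)⟩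

theorem mem_sInv_comm (hcomm : IsComm op) {a t : S} {A : Set S} :
    t ∈ sInv op a A ↔ a ∈ sInv op t A := by
  simp only [sInv, Set.mem_ofPred_eq, hcomm a t]

theorem phiSet_inter_phiSet_subset_sInv (hps : IsPSemigroup op) {x a w : S}
    (hw : op x a = some w) : phiSet op a ∩ phiSet op w ⊆ sInv op a (phiSet op x) := by
  rintro t ⟨hat, hwt⟩
  obtain ⟨v, hv⟩ := Option.isSome_iff_exists.mp hat
  refine ⟨v, hv, ?_⟩
  have hassoc := hps x a t
  rw [hw, hv, Option.bind_some, Option.bind_some] at hassoc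
  rw [phiSet, Set.mem_ofPred_eq, ← hassoc]
  exact hwt

theorem InDelta.mul (hps : IsPSemigroup op)
    {mul : Ultrafilter S → Ultrafilter S → Ultrafilter S} (hmul : MulCompat op mul)
    {p q : Ultrafilter S} (hp : InDelta op p) (hq : InDelta op q) : InDelta op (mul p q) := by
  intro x
  rw [hmul p q hq]
  refine Filter.mem_of_superset (hp x) fun a ha => ?_
  obtain ⟨w, hw⟩ := Option.isSome_iff_exists.mp ha
  exact Filter.mem_of_superset (Filter.inter_mem (hq a) (hq w))
    (phiSet_inter_phiSet_subset_sInv hps hw)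

theorem ShiftInvariant.containsMember (hsi : ShiftInvariant op 𝓐) {A₀ A : Set S}
    (hA₀ : A₀ ∈ 𝓐) {x : S} (hx : ∀ a ∈ A₀, x ∈ sInv op a A) : ContainsMember 𝓐 A := by
  refine ⟨_, hsi A₀ hA₀ x fun a ha => ?_, ?_⟩
  · obtain ⟨v, hv, -⟩ := hx a ha
    simp [hv]
  · rintro y ⟨a, ha, hy⟩
    obtain ⟨v, hv, hvA⟩ := hx a ha
    rwa [← Option.some_injective _ (hv.symm.trans hy)]

theorem AdequatelyPR.exists_containsMember_of_sigmaSet_subset (hpr : AdequatelyPR op 𝓐)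
    (h₀ : ∅ ∉ 𝓐) {H : Finset S} (hH : H.Nonempty) {T : Finset (Set S)}
    (hT : sigmaSet op H ⊆ ⋃₀ ↑T) : ∃ A ∈ T, ContainsMember 𝓐 A := by
  obtain ⟨F, hFH, hF⟩ := hpr H hH (T.card + 1) T.card.succ_pos
  -- the extra empty piece only serves to make the number of pieces positive
  obtain ⟨j, A₀, hA₀, hsub⟩ :=
    hF (Fin.cons ∅ fun i => T.equivFin.symm i) fun s hs => by
      obtain ⟨A, hAT, hsA⟩ := hT (hFH hs)
      exact Set.mem_iUnion.mpr ⟨(T.equivFin ⟨A, hAT⟩).succ, by simpa using hsA⟩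
  induction j using Fin.cases with
  | zero => exact absurd (Set.subset_empty_iff.mp hsub ▸ hA₀) h₀
  | succ i => exact ⟨_, (T.equivFin.symm i).2, A₀, hA₀, by simpa using hsub⟩

def memberFilter (op : S → S → Option S) (𝓐 : Set (Set S)) : Filter S :=
  Filter.comk
    (fun N => ∃ (H : Finset S) (T : Finset (Set S)),
      (∀ A ∈ T, ¬ ContainsMember 𝓐 A) ∧ N ⊆ (sigmaSet op H)ᶜ ∪ ⋃₀ ↑T)
    ⟨∅, ∅, by simp⟩
    (fun _ ⟨H, T, hT, hN⟩ _ hsub => ⟨H, T, hT, hsub.trans hN⟩)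
    (fun _ ⟨H₁, T₁, hT₁, hN₁⟩ _ ⟨H₂, T₂, hT₂, hN₂⟩ =>
      ⟨H₁ ∪ H₂, T₁ ∪ T₂, by simpa [or_imp, forall_and] using ⟨hT₁, hT₂⟩, by
        rw [sigmaSet_union, Set.compl_inter, Finset.coe_union, Set.sUnion_union]
        exact Set.union_subset (hN₁.trans (by gcongr <;> simp))
          (hN₂.trans (by gcongr <;> simp))⟩)

theorem phiSet_mem_memberFilter (x : S) : phiSet op x ∈ memberFilter op 𝓐 :=
  ⟨{x}, ∅, by simp, fun t ht => .inl fun h => ht (h x (Finset.mem_singleton_self x))⟩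

theorem compl_mem_memberFilter {A : Set S} (hA : ¬ ContainsMember 𝓐 A) :
    Aᶜ ∈ memberFilter op 𝓐 :=
  ⟨∅, {A}, by simpa using hA, by simp⟩

theorem memberFilter_neBot [Nonempty S] (hpr : AdequatelyPR op 𝓐) (h₀ : ∅ ∉ 𝓐) :
    (memberFilter op 𝓐).NeBot := by
  obtain ⟨s₀⟩ := ‹Nonempty S›
  refine Filter.neBot_iff.mpr fun hbot => ?_
  obtain ⟨H, T, hT, hcov⟩ : ∃ (H : Finset S) (T : Finset (Set S)),
      (∀ A ∈ T, ¬ ContainsMember 𝓐 A) ∧ (∅ : Set S)ᶜ ⊆ (sigmaSet op H)ᶜ ∪ ⋃₀ ↑T :=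
    (Filter.empty_mem_iff_bot.mpr hbot)
  have hσ : sigmaSet op (insert s₀ H) ⊆ ⋃₀ ↑T := fun t ht => by
    have hH : t ∈ sigmaSet op H := fun s hs => ht s (Finset.mem_insert_of_mem hs)
    simpa [hH] using hcov (Set.mem_compl (Set.notMem_empty t))
  obtain ⟨A, hAT, hA⟩ :=
    hpr.exists_containsMember_of_sigmaSet_subset h₀ (Finset.insert_nonempty s₀ H) hσ
  exact hT A hAT hA

theorem AdequatelyPR.exists_inDelta_forall_containsMember [Nonempty S]
    (hpr : AdequatelyPR op 𝓐) (h₀ : ∅ ∉ 𝓐) :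
    ∃ u : Ultrafilter S, InDelta op u ∧ ∀ A ∈ u, ContainsMember 𝓐 A := by
  have := memberFilter_neBot hpr h₀
  obtain ⟨u, hu⟩ := Ultrafilter.exists_le (memberFilter op 𝓐)
  refine ⟨u, fun x => hu (phiSet_mem_memberFilter x), fun A hA => ?_⟩
  by_contra hA'
  exact Ultrafilter.compl_notMem_iff.mpr hA (hu (compl_mem_memberFilter hA'))

def memberUltrafilters (op : S → S → Option S) (𝓐 : Set (Set S)) : Set (Ultrafilter S) :=
  {q | InDelta op q ∧ ∀ A ∈ q, ContainsMember 𝓐 A}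

variable {mul : Ultrafilter S → Ultrafilter S → Ultrafilter S}

theorem mul_mem_memberUltrafilters_left (hps : IsPSemigroup op) (hcomm : IsComm op)
    (hmul : MulCompat op mul) (hsi : ShiftInvariant op 𝓐) {r q : Ultrafilter S}
    (hr : InDelta op r) (hq : q ∈ memberUltrafilters op 𝓐) :
    mul r q ∈ memberUltrafilters op 𝓐 := by
  refine ⟨hr.mul hps hmul hq.1, fun A hA => ?_⟩
  obtain ⟨a, ha⟩ := Ultrafilter.nonempty_of_mem ((hmul r q hq.1 A).mp hA)
  obtain ⟨A₀, hA₀, hsub⟩ := hq.2 _ ha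
  exact hsi.containsMember hA₀ fun b hb => (mem_sInv_comm hcomm).mp (hsub hb)

theorem mul_mem_memberUltrafilters_right (hps : IsPSemigroup op) (hmul : MulCompat op mul)
    (hfin : ∀ A ∈ 𝓐, A.Finite) (hsi : ShiftInvariant op 𝓐) {q r : Ultrafilter S}
    (hq : q ∈ memberUltrafilters op 𝓐) (hr : InDelta op r) :
    mul q r ∈ memberUltrafilters op 𝓐 := by
  refine ⟨hq.1.mul hps hmul hr, fun A hA => ?_⟩
  obtain ⟨A₀, hA₀, hsub⟩ := hq.2 _ ((hmul q r hr A).mp hA)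
  have hmem : (⋂ a ∈ A₀, sInv op a A) ∈ r :=
    (Filter.biInter_mem (hfin A₀ hA₀)).mpr fun a ha => hsub ha
  obtain ⟨t, ht⟩ := Ultrafilter.nonempty_of_mem hmem
  exact hsi.containsMember hA₀ (Set.mem_iInter₂.mp ht)

theorem isIdealK_memberUltrafilters [Nonempty S] (hps : IsPSemigroup op) (hcomm : IsComm op)
    (hmul : MulCompat op mul) (hfin : ∀ A ∈ 𝓐, A.Finite) (hsi : ShiftInvariant op 𝓐)
    (hpr : AdequatelyPR op 𝓐) (h₀ : ∅ ∉ 𝓐) :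
    IsIdealK op mul (memberUltrafilters op 𝓐) :=
  ⟨hpr.exists_inDelta_forall_containsMember h₀, fun _ hq => hq.1,
    fun _ hr _ hq => mul_mem_memberUltrafilters_left hps hcomm hmul hsi hr hq,
    fun _ hq _ hr => mul_mem_memberUltrafilters_right hps hmul hfin hsi hq hr⟩

end PSG

open PSG in
theorem pws_contains_member_general {S : Type}
    (op : S → S → Option S)
    (hps : IsPSemigroup op) (hcomm : IsComm op)
    (mul : Ultrafilter S → Ultrafilter S → Ultrafilter S) (hmul : MulCompat op mul)
    (𝓐 : Set (Set S)) (hfin : ∀ A ∈ 𝓐, A.Finite)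
    (hsi : ShiftInvariant op 𝓐) (hpr : AdequatelyPR op 𝓐)
    (E : Set S) (hE : IsPWSyndetic op mul E) :
    ∃ A ∈ 𝓐, A ⊆ E := by
  by_cases h₀ : ∅ ∈ 𝓐
  · exact ⟨∅, h₀, Set.empty_subset E⟩
  obtain ⟨p, hEp, hpK⟩ := hE
  have : Nonempty S := Filter.nonempty_of_neBot (p : Filter S)
  have hpJ : p ∈ memberUltrafilters op 𝓐 :=
    Set.mem_sInter.mp hpK _ (isIdealK_memberUltrafilters hps hcomm hmul hfin hsi hpr h₀)
  exact hpJ.2 E hEp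

open PSG in
/-- A shift-invariant, adequately partition regular family of finite subsets of `S` meets
every piecewise syndetic set. -/
theorem pws_contains_member {S : Type}
    (op : S → S → Option S)
    (hps : IsPSemigroup op) (hcomm : IsComm op) (hadq : IsAdequate op)
    (mul : Ultrafilter S → Ultrafilter S → Ultrafilter S) (hmul : MulCompat op mul)
    (𝓐 : Set (Set S)) (hfin : ∀ A ∈ 𝓐, A.Finite)
    (hsi : ShiftInvariant op 𝓐) (hpr : AdequatelyPR op 𝓐)
    (E : Set S) (hE : IsPWSyndetic op mul E) :
    ∃ A ∈ 𝓐, A ⊆ E :=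
  pws_contains_member_general op hps hcomm mul hmul 𝓐 hfin hsi hpr E hE
end

section
/- Let l ∈ ℕ and let 𝓟 be a finite family of set-polynomials over (P_f(ℕ^l),+) whose constant terms are empty. Then there exist q ∈ ℕ and the IP ring 𝓕^{(1)} = {α ∈ P_f(ℕ) : min α > q} such that {⟨P(α)⟩_{α∈𝓕^{(1)}} : P(X) ∈ 𝓟} is an adequate set of VIP systems in (P_f(ℕ^l),+). -/
open scoped Classical

namespace SetPoly

/-- `P_f(ℕ^l)`: nonempty finite subsets of `ℕ^l`. -/
def PFN (l : ℕ) : Type := {A : Finset (Fin l → ℕ) // A.Nonempty}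

/-- the partial operation `A + B = A ∪ B`, defined iff `A ∩ B = ∅`. -/
def unionOp (l : ℕ) (A B : PFN l) : Option (PFN l) :=
  if Disjoint A.1 B.1 then some ⟨A.1 ∪ B.1, A.2.mono Finset.subset_union_left⟩ else none

/-- a set-monomial `S_1 × ⋯ × S_l` in the variable `X`: `none` in coordinate `i` stands for
the symbol `X`, and `some c` stands for the singleton coefficient `{c}`. -/
abbrev Mono (l : ℕ) := Fin l → Option ℕ

/-- evaluation of a set-monomial at `α` (substituting `α` for `X`). -/
def evalMono {l : ℕ} (c : Mono l) (α : Finset ℕ) : Finset (Fin l → ℕ) :=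
  Fintype.piFinset fun i => (c i).elim α (fun n => {n})

/-- a set-polynomial is a nonempty finite set of set-monomials; its evaluation at `α`. -/
def evalPoly {l : ℕ} (P : Finset (Mono l)) (α : Finset ℕ) : Finset (Fin l → ℕ) :=
  P.biUnion fun c => evalMono c α

/-- evaluation of a set-polynomial as a member of `P_f(ℕ^l)` (with a junk value in the
degenerate case of an empty evaluation, which does not occur for nonempty `P` and `α`). -/
noncomputable def evalPolyS {l : ℕ} (P : Finset (Mono l)) (α : Finset ℕ) : PFN l :=
  if h : (evalPoly P α).Nonempty then ⟨_, h⟩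
  else ⟨{fun _ => 0}, Finset.singleton_nonempty _⟩

/-- the constant term of `P` is empty: every monomial of `P` has degree at least one. -/
def ConstantTermEmpty {l : ℕ} (P : Finset (Mono l)) : Prop := ∀ c ∈ P, ∃ i, c i = none

end SetPoly

/-!
Let `Q` bound the constants of all the monomials. For `α` above `Q`, a point `x ∈ c(α)` determines
the monomial `c` (the coordinates of `x` above `Q` are exactly the `X`-coordinates of `c`) and the
set `γ ⊆ α` of its coordinates above `Q`, which has at most `l` elements. So every `P(α)` is the
disjoint union, over the monomials `c` of `P` and the `γ ∈ F_l` inside `α`, of the pieces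
`{x ∈ c(γ) : the coordinates of x above Q are γ}`, and the monomials of all the polynomials
(together with `X × ⋯ × X`, so that there is at least one) index the common VIP systems `n^{(s)}`.
A point lies only in pieces whose `γ` is bounded by its largest coordinate, which gives adequacy.
-/

namespace PSG

variable {S : Type}

theorem exists_generatesVIP [Nonempty S] {op : S → S → Option S} {R : Finset ℕ → Prop} {d : ℕ}
    {m : Finset ℕ → Option S}
    (h : ∀ α : Finset ℕ, α.Nonempty → R α → ∃ s, zsumFinset op (fdSubsets d α) m = some (some s)) :
    ∃ v, GeneratesVIP op R d m v := by
  choose! v hv using h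
  exact ⟨v, hv⟩

theorem mem_fdSubsets {d : ℕ} {α γ : Finset ℕ} :
    γ ∈ fdSubsets d α ↔ γ ⊆ α ∧ γ.Nonempty ∧ γ.card ≤ d := by
  simp [fdSubsets]

end PSG

namespace SetPoly

open PSG Finset Function

variable {l : ℕ}

instance : Nonempty (PFN l) := ⟨⟨{0}, singleton_nonempty _⟩⟩

/-- A finite subset of `ℕ^l` as an element of `P_f(ℕ^l) ∪ {0}`, the empty set becoming `0`. -/
noncomputable def ofFinset (F : Finset (Fin l → ℕ)) : Option (PFN l) :=
  if h : F.Nonempty then some ⟨F, h⟩ else none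

theorem ofFinset_val (A : PFN l) : ofFinset A.1 = some A := by
  simp [ofFinset, A.2]
  rfl

theorem unionOp_isSome_iff {A B : PFN l} : (unionOp l A B).isSome ↔ Disjoint A.1 B.1 := by
  by_cases h : Disjoint A.1 B.1 <;> simp [unionOp, h]
  rfl

theorem zop_ofFinset {F G : Finset (Fin l → ℕ)} (h : Disjoint F G) :
    zop (unionOp l) (ofFinset F) (ofFinset G) = some (ofFinset (F ∪ G)) := by
  rcases F.eq_empty_or_nonempty with rfl | hF
  · simp [ofFinset, zop]
  rcases G.eq_empty_or_nonempty with rfl | hG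
  · simp [ofFinset, hF, zop]
  · simp [ofFinset, hF, hG, hF.mono subset_union_left, zop, unionOp, h]
    exact ⟨_, rfl, rfl⟩

theorem zsum_map_ofFinset {β : Type*} [DecidableEq β] (F : β → Finset (Fin l → ℕ)) :
    ∀ L : List β, L.Pairwise (Disjoint on F) →
      zsum (unionOp l) (L.map fun b => ofFinset (F b)) = some (ofFinset (L.toFinset.biUnion F))
  | [], _ => by simp [zsum, ofFinset]
  | b :: L, h => by
    rw [List.pairwise_cons] at h
    have hdisj : Disjoint (F b) (L.toFinset.biUnion F) :=
      (disjoint_biUnion_right _ _ _).2 fun c hc => h.1 c (List.mem_toFinset.1 hc)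
    change (zsum (unionOp l) (L.map fun b => ofFinset (F b))).bind
      (fun y => zop (unionOp l) (ofFinset (F b)) y) = _
    rw [zsum_map_ofFinset F L h.2, Option.bind_some, zop_ofFinset hdisj, List.toFinset_cons,
      biUnion_insert]

theorem zsumFinset_ofFinset {β : Type*} [DecidableEq β] {A : Finset β}
    {F : β → Finset (Fin l → ℕ)} (h : (A : Set β).PairwiseDisjoint F) :
    zsumFinset (unionOp l) A (fun b => ofFinset (F b)) = some (ofFinset (A.biUnion F)) := by
  have hL : A.toList.Pairwise (Disjoint on F) :=
    A.nodup_toList.imp_of_mem fun ha hb hne => h (mem_toList.1 ha) (mem_toList.1 hb) hne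
  rw [zsumFinset, zsum_map_ofFinset F _ hL, toList_toFinset]

theorem ofFinset_eq_none_or_mem_sigmaSet {F : Finset (Fin l → ℕ)} {H : Finset (PFN l)}
    (h : ∀ A ∈ H, Disjoint A.1 F) :
    ofFinset F = none ∨ ∃ s, ofFinset F = some s ∧ s ∈ sigmaSet (unionOp l) H := by
  rcases F.eq_empty_or_nonempty with rfl | hF
  · simp [ofFinset]
  · exact Or.inr ⟨⟨F, hF⟩, dif_pos hF, fun A hA => unionOp_isSome_iff.2 (h A hA)⟩

theorem isAdequateVIPFamily_unionOp {ι κ : Type*} [DecidableEq κ] {R : Finset ℕ → Prop}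
    {d : ℕ} (hd : 0 < d) {K : Finset κ} (hK : K.Nonempty) {E : ι → Finset κ}
    (hE : ∀ i, E i ⊆ K) {piece : κ → Finset ℕ → Finset (Fin l → ℕ)}
    (hdisj : ((K : Set κ) ×ˢ Set.univ).PairwiseDisjoint (uncurry piece))
    (hbdd : ∀ p, ∃ B, ∀ c γ, p ∈ piece c γ → γ ⊆ Iic B)
    (hne : ∀ c ∈ K, ∀ α, α.Nonempty → R α → ((fdSubsets d α).biUnion (piece c)).Nonempty)
    {v : ι → Finset ℕ → PFN l}
    (hv : ∀ i α, α.Nonempty → R α →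
      (v i α).1 = (E i).biUnion fun c => (fdSubsets d α).biUnion (piece c)) :
    IsAdequateVIPFamily (unionOp l) R v := by
  have hdisj' {c c' γ γ'} (hc : c ∈ K) (hc' : c' ∈ K) (hne : (c, γ) ≠ (c', γ')) :
      Disjoint (piece c γ) (piece c' γ') :=
    hdisj (Set.mk_mem_prod hc trivial) (Set.mk_mem_prod hc' trivial) hne
  set e : Fin K.card → κ := fun k => K.equivFin.symm k
  have he : Injective e := Subtype.val_injective.comp K.equivFin.symm.injective
  have he_mem (k) : e k ∈ K := (K.equivFin.symm k).2
  have himage (i) : (univ.filter fun k => e k ∈ E i).image e = E i := by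
    ext c
    simp only [mem_image, mem_filter, mem_univ, true_and]
    refine ⟨fun ⟨k, hk, hkc⟩ => hkc ▸ hk, fun hc => ⟨K.equivFin ⟨c, hE i hc⟩, ?_⟩⟩
    simp [e, hc]
  refine ⟨d, K.card, hd, K.card_pos.2 hK, fun i γ => ofFinset ((E i).biUnion (piece · γ)),
    fun k γ => ofFinset (piece (e k) γ), fun i => univ.filter fun k => e k ∈ E i,
    fun i α hα hR => ?_, fun k => exists_generatesVIP fun α hα hR => ?_,
    fun H _ => ?_, fun i γ _ _ => ?_⟩
  · have hpw : (fdSubsets d α : Set (Finset ℕ)).PairwiseDisjoint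
        fun γ => (E i).biUnion (piece · γ) :=
      fun γ _ γ' _ hγ => (disjoint_biUnion_left _ _ _).2 fun c hc =>
        (disjoint_biUnion_right _ _ _).2 fun c' hc' =>
          hdisj' (hE i hc) (hE i hc') fun h => hγ (Prod.ext_iff.1 h).2
    rw [zsumFinset_ofFinset hpw, ← ofFinset_val (v i α), hv i α hα hR]
    simp only [← sup_eq_biUnion]
    rw [Finset.sup_comm]
  · have hpw : (fdSubsets d α : Set (Finset ℕ)).PairwiseDisjoint (piece (e k)) :=
      fun γ _ γ' _ hγ => hdisj' (he_mem k) (he_mem k) (by simp [hγ])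
    rw [zsumFinset_ofFinset hpw]
    exact ⟨_, congrArg some (dif_pos (hne (e k) (he_mem k) α hα hR))⟩
  · choose B hB using hbdd
    refine ⟨H.sup fun A => A.1.sup B, fun l' _ γ hγ _ hbig => ⟨_, zsumFinset_ofFinset ?_, ?_⟩⟩
    · rintro ⟨k, j⟩ - ⟨k', j'⟩ - hkj
      exact hdisj' (he_mem k) (he_mem k') fun h => hkj (by
        simp only [Prod.mk.injEq] at h ⊢; exact ⟨he h.1, hγ h.2⟩)
    refine ofFinset_eq_none_or_mem_sigmaSet fun A hA => ?_
    refine (disjoint_biUnion_right _ _ _).2 fun kj _ => disjoint_left.2 fun p hpA hp => ?_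
    exact hbig kj.2 ((hB p _ _ hp).trans (Iic_subset_Iic.2 (le_sup_of_le hA (le_sup hpA))))
  · have hpw : ((univ.filter fun k => e k ∈ E i : Finset _) : Set (Fin K.card)).PairwiseDisjoint
        (fun k => piece (e k) γ) :=
      fun k _ k' _ hk => hdisj' (he_mem k) (he_mem k') (by simp [he.ne hk])
    rw [zsumFinset_ofFinset hpw]
    dsimp only
    conv_rhs => rw [← himage i, image_biUnion]

theorem mem_evalMono {c : Mono l} {α : Finset ℕ} {x : Fin l → ℕ} :
    x ∈ evalMono c α ↔ ∀ i, (c i).elim (x i ∈ α) (x i = ·) := by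
  simp only [evalMono, Fintype.mem_piFinset]
  refine forall_congr' fun i => ?_
  cases c i <;> simp

theorem evalMono_nonempty (c : Mono l) {α : Finset ℕ} (hα : α.Nonempty) :
    (evalMono c α).Nonempty := by
  obtain ⟨a, ha⟩ := hα
  refine ⟨fun i => (c i).getD a, mem_evalMono.2 fun i => ?_⟩
  cases c i <;> simp [ha]

theorem evalPolyS_val {P : Finset (Mono l)} (hP : P.Nonempty) {α : Finset ℕ} (hα : α.Nonempty) :
    (evalPolyS P α).1 = evalPoly P α := by
  obtain ⟨c, hc⟩ := hP
  have hne : (evalPoly P α).Nonempty :=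
    (evalMono_nonempty c hα).mono (subset_biUnion_of_mem (evalMono · α) hc)
  exact congrArg Subtype.val (dif_pos hne : evalPolyS P α = ⟨_, hne⟩)

def highCoords (Q : ℕ) (x : Fin l → ℕ) : Finset ℕ := (univ.image x).filter (Q < ·)

theorem mem_highCoords {Q v : ℕ} {x : Fin l → ℕ} :
    v ∈ highCoords Q x ↔ (∃ i, x i = v) ∧ Q < v := by
  simp [highCoords]

theorem card_highCoords_le (Q : ℕ) (x : Fin l → ℕ) : (highCoords Q x).card ≤ l :=
  (card_filter_le _ _).trans (card_image_le.trans (by simp))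

theorem highCoords_subset_Iic (Q : ℕ) (x : Fin l → ℕ) : highCoords Q x ⊆ Iic (univ.sup x) := by
  intro v hv
  obtain ⟨⟨i, rfl⟩, -⟩ := mem_highCoords.1 hv
  exact mem_Iic.2 (le_sup (mem_univ i))

def CoeffsLE (Q : ℕ) (c : Mono l) : Prop := ∀ i k, c i = some k → k ≤ Q

theorem exists_coeffsLE (K : Finset (Mono l)) : ∃ Q, ∀ c ∈ K, CoeffsLE Q c :=
  ⟨K.sup fun c => univ.sup fun i => (c i).getD 0, fun c hc i k hk =>
    le_sup_of_le hc (le_sup_of_le (mem_univ i) (by simp [hk]))⟩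

/-- The set-monomial with constants at most `Q` whose evaluations above `Q` may contain `x`. -/
def shape (Q : ℕ) (x : Fin l → ℕ) : Mono l := fun i => if Q < x i then none else some (x i)

theorem mem_evalMono_iff_shape {Q : ℕ} {c : Mono l} (hc : CoeffsLE Q c) {α : Finset ℕ}
    (hα : ∀ a ∈ α, Q < a) {x : Fin l → ℕ} :
    x ∈ evalMono c α ↔ shape Q x = c ∧ highCoords Q x ⊆ α := by
  rw [mem_evalMono]
  constructor
  · intro hx
    have hshape : shape Q x = c := funext fun i => by
      have hxi := hx i
      cases hci : c i with
      | none => simp_all [shape]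
      | some k =>
        have := hc i k hci
        simp_all [shape]
    refine ⟨hshape, fun v hv => ?_⟩
    obtain ⟨⟨i, rfl⟩, hQi⟩ := mem_highCoords.1 hv
    have hxi := hx i
    rwa [← hshape, shape, if_pos hQi] at hxi
  · rintro ⟨rfl, hsub⟩ i
    by_cases hQi : Q < x i
    · simpa [shape, hQi] using hsub (mem_highCoords.2 ⟨⟨i, rfl⟩, hQi⟩)
    · simp [shape, hQi]

def monoPiece (Q : ℕ) (c : Mono l) (γ : Finset ℕ) : Finset (Fin l → ℕ) :=
  (evalMono c γ).filter fun x => highCoords Q x = γ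

theorem mem_monoPiece {Q : ℕ} {c : Mono l} (hc : CoeffsLE Q c) {γ : Finset ℕ}
    {x : Fin l → ℕ} : x ∈ monoPiece Q c γ ↔ shape Q x = c ∧ highCoords Q x = γ := by
  rw [monoPiece, mem_filter]
  constructor
  · rintro ⟨hx, rfl⟩
    exact ⟨((mem_evalMono_iff_shape hc fun _ ha => (mem_highCoords.1 ha).2).1 hx).1, rfl⟩
  · rintro ⟨hshape, rfl⟩
    exact ⟨(mem_evalMono_iff_shape hc fun _ ha => (mem_highCoords.1 ha).2).2 ⟨hshape, subset_rfl⟩,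
      rfl⟩

theorem pairwiseDisjoint_monoPiece {Q : ℕ} {K : Finset (Mono l)} (hK : ∀ c ∈ K, CoeffsLE Q c) :
    ((K : Set (Mono l)) ×ˢ Set.univ).PairwiseDisjoint (uncurry (monoPiece Q)) := by
  rintro ⟨c, γ⟩ ⟨hc, -⟩ ⟨c', γ'⟩ ⟨hc', -⟩ hne
  refine disjoint_left.2 fun x hx hx' => hne ?_
  obtain ⟨rfl, rfl⟩ := (mem_monoPiece (hK c hc)).1 hx
  obtain ⟨rfl, rfl⟩ := (mem_monoPiece (hK c' hc')).1 hx'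
  rfl

theorem subset_Iic_of_mem_monoPiece {Q : ℕ} {c : Mono l} {γ : Finset ℕ} {x : Fin l → ℕ}
    (hx : x ∈ monoPiece Q c γ) : γ ⊆ Iic (univ.sup x) :=
  (mem_filter.1 hx).2 ▸ highCoords_subset_Iic Q x

theorem evalMono_eq_biUnion_monoPiece {Q : ℕ} {c : Mono l} (hc : CoeffsLE Q c)
    (hdeg : ∃ i, c i = none) {α : Finset ℕ} (hα : ∀ a ∈ α, Q < a) :
    evalMono c α = (fdSubsets l α).biUnion (monoPiece Q c) := by
  ext x
  simp only [mem_evalMono_iff_shape hc hα, mem_biUnion, mem_fdSubsets, mem_monoPiece hc]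
  constructor
  · rintro ⟨rfl, hsub⟩
    obtain ⟨i, hi⟩ := hdeg
    have hQi : Q < x i := by
      by_contra h
      simp [shape, h] at hi
    exact ⟨_, ⟨hsub, ⟨x i, mem_highCoords.2 ⟨⟨i, rfl⟩, hQi⟩⟩, card_highCoords_le Q x⟩, rfl, rfl⟩
  · rintro ⟨γ, ⟨hγ, -⟩, hshape, rfl⟩
    exact ⟨hshape, hγ⟩

end SetPoly

open PSG SetPoly in
/-- For a finite family `𝓟` of set-polynomials with empty constant term there are `Q ∈ ℕ`
and the IP ring `𝓕^{(1)} = {α : min α > Q}` such that `{⟨P(α)⟩ : P ∈ 𝓟}` is an adequate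
set of VIP systems. -/
theorem set_polynomials_adequate_VIP (l : ℕ) (hl : 0 < l)
    (𝓟 : Finset (Finset (Mono l)))
    (h𝓟 : ∀ P ∈ 𝓟, P.Nonempty ∧ ConstantTermEmpty P) :
    ∃ Q : ℕ, IsAdequateVIPFamily (unionOp l)
      (fun α => ∀ x ∈ α, Q < x)
      (fun (P : {P // P ∈ 𝓟}) (α : Finset ℕ) => evalPolyS P.1 α) := by
  set K : Finset (Mono l) := insert (fun _ => none) (𝓟.biUnion id)
  have hKdeg : ConstantTermEmpty K := by
    simp only [ConstantTermEmpty, K, Finset.mem_insert, Finset.mem_biUnion, id]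
    rintro c (rfl | ⟨P, hP, hc⟩)
    exacts [⟨⟨0, hl⟩, rfl⟩, (h𝓟 P hP).2 c hc]
  have hPK (P) (hP : P ∈ 𝓟) : P ⊆ K :=
    (Finset.subset_biUnion_of_mem id hP).trans (Finset.subset_insert _ _)
  obtain ⟨Q, hQ⟩ := exists_coeffsLE K
  have hsplit {c} (hc : c ∈ K) {α} (hα : ∀ a ∈ α, Q < a) :=
    evalMono_eq_biUnion_monoPiece (hQ c hc) (hKdeg c hc) hα
  refine ⟨Q, isAdequateVIPFamily_unionOp hl (Finset.insert_nonempty _ _)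
    (E := fun P => P.1) (fun P => hPK P.1 P.2)
    (pairwiseDisjoint_monoPiece hQ) (fun x => ⟨_, fun _ _ => subset_Iic_of_mem_monoPiece⟩)
    (fun c hc α hα hQα => hsplit hc hQα ▸ evalMono_nonempty c hα) fun P α hα hQα => ?_⟩
  rw [evalPolyS_val (h𝓟 P.1 P.2).1 hα, evalPoly]
  exact Finset.biUnion_congr rfl fun c hc => hsplit (hPK P.1 P.2 hc) hQα
end

section
/- (The Original Central Sets Theorem.) Let l ∈ ℕ and for each i ∈ {1,…,l} let ⟨y_{i,n}⟩_{n=1}^∞ be a sequence in ℤ. Let C be a central subset of ℕ. Then there exist a sequence ⟨a_n⟩_{n=1}^∞ in ℕ and a sequence ⟨H_n⟩_{n=1}^∞ of nonempty finite subsets of ℕ such that: (1) for all n, max H_n < min H_{n+1}; and (2) for all nonempty finite F ⊆ ℕ and all i ∈ {1,…,l}, Σ_{n∈F} (a_n + Σ_{t∈H_n} y_{i,t}) ∈ C. -/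
open scoped Classical

namespace TotalSG

/-- the extension of `+` to `βS`: `A ∈ p+q ↔ {x : -x+A ∈ q} ∈ p`. -/
def uadd {S : Type} [Add S] (p q : Ultrafilter S) : Ultrafilter S :=
  p.bind fun x => q.map fun y => x + y

/-- a two-sided ideal of `(βS,+)`. -/
def IsIdeal {S : Type} [Add S] (I : Set (Ultrafilter S)) : Prop :=
  I.Nonempty ∧ (∀ p : Ultrafilter S, ∀ q ∈ I, uadd p q ∈ I) ∧
    (∀ q ∈ I, ∀ p : Ultrafilter S, uadd q p ∈ I)

/-- `K(βS)`, the smallest two-sided ideal of `βS` (= the intersection of all two-sided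
ideals). -/
def KSet (S : Type) [Add S] : Set (Ultrafilter S) := ⋂₀ {I | IsIdeal I}

/-- `C ⊆ S` is central: it belongs to some idempotent ultrafilter in `K(βS)`. -/
def IsCentral {S : Type} [Add S] (C : Set S) : Prop :=
  ∃ p : Ultrafilter S, uadd p p = p ∧ p ∈ KSet S ∧ C ∈ p

/-- addition on `Option S`, with `none` the formal empty sum. -/
def oadd {S : Type} [Add S] : Option S → Option S → Option S
  | none, y => y
  | some a, none => some a
  | some a, some b => some (a + b)

/-- sum of a list of (optional) terms; `none` iff there are no terms. -/
def osumO {S : Type} [Add S] (l : List (Option S)) : Option S := l.foldr oadd none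

/-- `Σ_{t ∈ H} f(t)` (in increasing order of indices); `none` iff `H = ∅`. -/
def osumF {S : Type} [Add S] (f : ℕ → S) (H : Finset ℕ) : Option S :=
  osumO ((H.sort (· ≤ ·)).map fun t => some (f t))

/-- `A ⊆ S` is a J-set: for every `F ∈ P_f(S^ℕ)` there are `a ∈ S` and `H ∈ P_f(ℕ)` with
`a + Σ_{t ∈ H} f(t) ∈ A` for every `f ∈ F`. -/
def IsJSet {S : Type} [Add S] (A : Set S) : Prop :=
  ∀ F : Finset (ℕ → S), F.Nonempty →
    ∃ (a : S) (H : Finset ℕ), H.Nonempty ∧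
      ∀ f ∈ F, ∃ x : S, osumF f H = some x ∧ a + x ∈ A

end TotalSG

/-! Central sets are members of minimal idempotents `p`. Members of `p ∈ K(βℕ)` are piecewise
syndetic, and by the Hales–Jewett theorem a piecewise syndetic set contains `a + ∑_{t ∈ H} y i t`
for all `i` at once, with `H` beyond any prescribed bound. Since `p` is idempotent, each
`c ∈ C⋆ = {c ∈ C | -c + C ∈ p}` satisfies `-c + C⋆ ∈ p`, so the next block can be chosen inside
`C⋆` and all its translates by the finite sums built so far. -/

namespace TotalSG

theorem mem_uadd {S : Type} [Add S] {p q : Ultrafilter S} {A : Set S} :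
    A ∈ uadd p q ↔ {x | {y | x + y ∈ A} ∈ q} ∈ p :=
  Iff.rfl

def IsPiecewiseSyndetic (A : Set ℕ) : Prop :=
  ∃ d : ℕ, ∀ L : ℕ, ∃ x : ℕ, ∀ k ≤ L, ∃ j ≤ d, x + k + j ∈ A

theorem isPiecewiseSyndetic_univ : IsPiecewiseSyndetic Set.univ :=
  ⟨0, fun _ => ⟨0, fun _ _ => ⟨0, le_rfl, trivial⟩⟩⟩

theorem not_isPiecewiseSyndetic_empty : ¬IsPiecewiseSyndetic ∅ := fun ⟨_, hd⟩ =>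
  let ⟨_, hx⟩ := hd 0
  let ⟨_, _, h⟩ := hx 0 le_rfl
  h

namespace IsPiecewiseSyndetic

theorem mono {A B : Set ℕ} (hA : IsPiecewiseSyndetic A) (hAB : A ⊆ B) :
    IsPiecewiseSyndetic B :=
  let ⟨d, hd⟩ := hA
  ⟨d, fun L => (hd L).imp fun _ hx k hk => (hx k hk).imp fun _ => And.imp_right (@hAB _)⟩

/-- If `A` is not piecewise syndetic, every stretch of some length `L₀` contains `d + 1`
consecutive points outside `A`; where the gaps of `A ∪ B` are at most `d`, one of those points
lies in `B`. -/
theorem or_of_union {A B : Set ℕ} (h : IsPiecewiseSyndetic (A ∪ B)) :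
    IsPiecewiseSyndetic A ∨ IsPiecewiseSyndetic B := by
  refine or_iff_not_imp_left.2 fun hA => ?_
  obtain ⟨d, hd⟩ := h
  simp only [IsPiecewiseSyndetic, not_exists, not_forall, not_and] at hA
  obtain ⟨L₀, hL₀⟩ := hA d
  refine ⟨L₀ + d, fun L => ?_⟩
  obtain ⟨x, hx⟩ := hd (L + L₀)
  refine ⟨x, fun k hk => ?_⟩
  obtain ⟨k₁, hk₁, hnA⟩ := hL₀ (x + k)
  obtain ⟨j, hj, hAB⟩ := hx (k + k₁) (by omega)
  rw [← add_assoc] at hAB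
  exact ⟨k₁ + j, by omega, by
    simpa [add_assoc] using hAB.resolve_left (hnA j hj)⟩

theorem of_preimage_add_left {A : Set ℕ} {x : ℕ} (h : IsPiecewiseSyndetic {y | x + y ∈ A}) :
    IsPiecewiseSyndetic A :=
  let ⟨d, hd⟩ := h
  ⟨d, fun L =>
    let ⟨x₀, hx₀⟩ := hd L
    ⟨x + x₀, fun k hk => by simpa only [add_assoc, Set.mem_ofPred_eq] using hx₀ k hk⟩⟩

theorem of_ultrafilter {A : Set ℕ} (p : Ultrafilter ℕ)
    (h : IsPiecewiseSyndetic {x | {y | x + y ∈ A} ∈ p}) : IsPiecewiseSyndetic A := by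
  obtain ⟨d, hd⟩ := h
  refine ⟨d, fun L => ?_⟩
  obtain ⟨x₀, hx₀⟩ := hd L
  let U := (Finset.Icc x₀ (x₀ + L + d)).filter fun u => {y | u + y ∈ A} ∈ p
  obtain ⟨z, hz⟩ := p.nonempty_of_mem <|
    (Filter.biInter_finset_mem U).2 fun u hu => (Finset.mem_filter.1 hu).2
  refine ⟨x₀ + z, fun k hk => ?_⟩
  obtain ⟨j, hj, hmem⟩ := hx₀ k hk
  have hU : x₀ + k + j ∈ U := Finset.mem_filter.2 ⟨Finset.mem_Icc.2 ⟨by omega, by omega⟩, hmem⟩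
  have hzA : x₀ + k + j + z ∈ A := Set.mem_iInter₂.1 hz _ hU
  exact ⟨j, hj, by rwa [add_right_comm x₀ z, add_right_comm _ z]⟩

end IsPiecewiseSyndetic

theorem exists_ultrafilter_forall_isPiecewiseSyndetic :
    ∃ q : Ultrafilter ℕ, ∀ A ∈ q, IsPiecewiseSyndetic A := by
  let f : Filter ℕ := Filter.comk (fun A => ¬IsPiecewiseSyndetic A) not_isPiecewiseSyndetic_empty
    (fun _ ht _ hst hs => ht (hs.mono hst)) (fun _ hs _ ht hst => hst.or_of_union.elim hs ht)
  have : f.NeBot := ⟨fun hbot => Filter.mem_comk.1 (Filter.empty_mem_iff_bot.2 hbot)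
    (by simpa using isPiecewiseSyndetic_univ)⟩
  refine ⟨Ultrafilter.of f, fun A hA => by_contra fun hnA => ?_⟩
  have hAc : Aᶜ ∈ Ultrafilter.of f := Ultrafilter.of_le f (by simpa [f] using hnA)
  exact Ultrafilter.compl_notMem_iff.2 hA hAc

theorem isIdeal_setOf_forall_isPiecewiseSyndetic :
    IsIdeal {q : Ultrafilter ℕ | ∀ A ∈ q, IsPiecewiseSyndetic A} :=
  ⟨exists_ultrafilter_forall_isPiecewiseSyndetic,
    fun p _ hq _ hA =>
      let ⟨_, hx⟩ := p.nonempty_of_mem (mem_uadd.1 hA)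
      (hq _ hx).of_preimage_add_left,
    fun _ hq p _ hA => (hq _ (mem_uadd.1 hA)).of_ultrafilter p⟩

theorem isPiecewiseSyndetic_of_mem_KSet {p : Ultrafilter ℕ} (hp : p ∈ KSet ℕ) {A : Set ℕ}
    (hA : A ∈ p) : IsPiecewiseSyndetic A :=
  Set.mem_sInter.1 hp _ isIdeal_setOf_forall_isPiecewiseSyndetic A hA

/-- A word `w` is coloured by the offset at which `A` is met after `x + ∑ j, z j (w j)`; these
points all lie in one window of `A` because `∑ j, z j (w j) ≤ ∑ j, ∑ i, z j i`. -/
theorem IsPiecewiseSyndetic.exists_line {A : Set ℕ} (hA : IsPiecewiseSyndetic A) (κ : Type*)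
    [Finite κ] : ∃ (ι : Type) (_ : Fintype ι), ∀ z : ι → κ → ℕ,
      ∃ (l : Combinatorics.Line κ ι) (b : ℕ), ∀ i, b + ∑ j, z j (l i j) ∈ A := by
  have := Fintype.ofFinite κ
  obtain ⟨d, hd⟩ := hA
  obtain ⟨ι, _, hι⟩ := Combinatorics.Line.exists_mono_in_high_dimension κ (Fin (d + 1))
  refine ⟨ι, inferInstance, fun z => ?_⟩
  obtain ⟨x, hx⟩ := hd (∑ j, ∑ i, z j i)
  have hoffset (w : ι → κ) : ∃ c : Fin (d + 1), x + ∑ j, z j (w j) + c ∈ A := by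
    obtain ⟨c, hc, hmem⟩ := hx _ <| Finset.sum_le_sum fun j _ =>
      Finset.single_le_sum (fun _ _ => Nat.zero_le _) (Finset.mem_univ (w j))
    exact ⟨⟨c, Nat.lt_succ_of_le hc⟩, hmem⟩
  choose colour hcolour using hoffset
  obtain ⟨l, c, hl⟩ := hι colour
  exact ⟨l, x + c, fun i => by simpa only [hl i, add_right_comm] using hcolour (l i)⟩

theorem IsPiecewiseSyndetic.exists_add_sum_mem {A : Set ℕ} (hA : IsPiecewiseSyndetic A)
    {κ : Type*} [Finite κ] (y : κ → ℕ → ℤ) (m : ℕ) :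
    ∃ (a : ℕ) (H : Finset ℕ), H.Nonempty ∧ (∀ t ∈ H, m < t) ∧
      ∀ i, ∃ c ∈ A, (c : ℤ) = a + ∑ t ∈ H, y i t := by
  have := Fintype.ofFinite κ
  obtain ⟨ι, _, hι⟩ := hA.exists_line κ
  let t : ι → ℕ := fun j => m + 1 + Fintype.equivFin ι j
  have ht : Function.Injective t := fun j j' h =>
    (Fintype.equivFin ι).injective (Fin.ext (by simpa [t] using h))
  -- shifting coordinate `j` by `K j` makes all letters natural numbers
  let K : ι → ℕ := fun j => ∑ i, (y i (t j)).natAbs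
  have hK (i : κ) (j : ι) : 0 ≤ y i (t j) + K j := by
    have := Finset.single_le_sum (f := fun i => (y i (t j)).natAbs) (fun _ _ => Nat.zero_le _)
      (Finset.mem_univ i)
    have := neg_abs_le (y i (t j))
    push_cast [K, Int.natCast_natAbs] at *
    linarith
  let z : ι → κ → ℕ := fun j i => (y i (t j) + K j).toNat
  obtain ⟨l, b, hb⟩ := hι z
  let V := Finset.univ.filter fun j => l.idxFun j = none
  have hz (i : κ) (j : ι) : (z j (l i j) : ℤ) =
      ((l.idxFun j).elim (K j) (z j) : ℕ) + if l.idxFun j = none then y i (t j) else 0 := by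
    cases h : l.idxFun j <;>
      simp [z, h, Int.toNat_of_nonneg (hK _ _), add_comm]
  refine ⟨b + ∑ j, (l.idxFun j).elim (K j) (z j), V.image t, ?_, ?_, fun i => ⟨_, hb i, ?_⟩⟩
  · obtain ⟨j, hj⟩ := l.proper
    exact ⟨t j, Finset.mem_image_of_mem t (by simpa [V] using hj)⟩
  · simp only [Finset.mem_image]
    rintro _ ⟨j, -, rfl⟩
    exact Nat.lt_add_right _ m.lt_succ_self
  · rw [Finset.sum_image ht.injOn, Finset.sum_filter]
    push_cast
    simp only [hz, Finset.sum_add_distrib, add_assoc]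

/-- `A⋆ = {x ∈ A | -x + A ∈ p}` in the notation of Hindman–Strauss. -/
def starSet {S : Type} [Add S] (p : Ultrafilter S) (A : Set S) : Set S :=
  {x ∈ A | {y | x + y ∈ A} ∈ p}

theorem starSet_mem {S : Type} [Add S] {p : Ultrafilter S} (hp : uadd p p = p) {A : Set S}
    (hA : A ∈ p) : starSet p A ∈ p :=
  Filter.inter_mem hA <| mem_uadd.1 <| by rwa [hp]

theorem preimage_add_starSet_mem {S : Type} [AddSemigroup S] {p : Ultrafilter S}
    (hp : uadd p p = p) {A : Set S} {x : S} (hx : x ∈ starSet p A) :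
    {y | x + y ∈ starSet p A} ∈ p := by
  simpa only [starSet, Set.mem_ofPred_eq, add_assoc] using starSet_mem hp hx.2

theorem sum_mem_of_add_mem_succ {M ι : Type*} [AddCommMonoid M] (w : ℕ → ι → M)
    (G : ℕ → Set M) (hmono : ∀ n, G n ⊆ G (n + 1)) (hw : ∀ n i, w n i ∈ G (n + 1))
    (hadd : ∀ n i, ∀ g ∈ G n, g + w n i ∈ G (n + 1)) (n : ℕ) (F : Finset ℕ)
    (hF : F ⊆ Finset.range n) (hne : F.Nonempty) (i : ι) : ∑ k ∈ F, w k i ∈ G n := by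
  induction n generalizing F with
  | zero => simp_all [Finset.subset_empty]
  | succ n ih =>
    rw [Finset.range_add_one, Finset.subset_insert_iff] at hF
    by_cases hn : n ∈ F
    · rw [← Finset.insert_erase hn, Finset.sum_insert (Finset.notMem_erase n F), add_comm (w n i)]
      rcases (F.erase n).eq_empty_or_nonempty with he | he
      · simpa [he] using hw n i
      · exact hadd n i _ (ih _ hF he)
    · rw [Finset.erase_eq_of_notMem hn] at hF
      exact hmono n (ih F hF hne)

theorem exists_seq_forall_sum_mem {α M ι : Type*} [AddCommMonoid M] [Finite ι] {S : Set M}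
    (v : α → Finset ℕ → ι → M)
    (step : ∀ (m : ℕ) (G : Set M), G.Finite → G ⊆ S →
      ∃ (a : α) (H : Finset ℕ), H.Nonempty ∧ (∀ t ∈ H, m < t) ∧
        ∀ i, v a H i ∈ S ∧ ∀ g ∈ G, g + v a H i ∈ S) :
    ∃ (a : ℕ → α) (H : ℕ → Finset ℕ), (∀ n, (H n).Nonempty) ∧
      (∀ n, ∀ x ∈ H n, ∀ x' ∈ H (n + 1), x < x') ∧
      ∀ F : Finset ℕ, F.Nonempty → ∀ i, ∑ n ∈ F, v (a n) (H n) i ∈ S := by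
  choose a H hne hlt hmem using step
  -- a state is a bound for the blocks chosen so far and a finite set containing their sums
  let State := {s : ℕ × Set M // s.2.Finite ∧ s.2 ⊆ S}
  let aOf (s : State) : α := a s.1.1 s.1.2 s.2.1 s.2.2
  let HOf (s : State) : Finset ℕ := H s.1.1 s.1.2 s.2.1 s.2.2
  let w (s : State) (i : ι) : M := v (aOf s) (HOf s) i
  let next (s : State) : State :=
    ⟨((HOf s).sup id, s.1.2 ∪ ⋃ i, insert (w s i) ((· + w s i) '' s.1.2)),
      s.2.1.union (Set.finite_iUnion fun _ => (s.2.1.image _).insert _),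
      Set.union_subset s.2.2 (Set.iUnion_subset fun i => Set.insert_subset (hmem _ _ _ _ i).1
        (Set.image_subset_iff.2 (hmem _ _ _ _ i).2))⟩
  let s (n : ℕ) : State := next^[n] ⟨(0, ∅), Set.finite_empty, Set.empty_subset S⟩
  have hs (n : ℕ) : s (n + 1) = next (s n) := Function.iterate_succ_apply' next n _
  have hsum := sum_mem_of_add_mem_succ (fun n => w (s n)) (fun n => (s n).1.2)
    (fun n => by rw [hs]; exact Set.subset_union_left)
    (fun n i => by rw [hs]; exact Or.inr (Set.mem_iUnion.2 ⟨i, Set.mem_insert _ _⟩))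
    (fun n i g hg => by
      rw [hs]; exact Or.inr (Set.mem_iUnion.2 ⟨i, Set.mem_insert_of_mem _ ⟨g, hg, rfl⟩⟩))
  refine ⟨fun n => aOf (s n), fun n => HOf (s n), fun n => hne _ _ _ _, ?_, fun F hF i => ?_⟩
  · intro n x hx x' hx'
    have hbound := hlt _ _ _ _ x' hx'
    rw [hs] at hbound
    exact lt_of_le_of_lt (Finset.le_sup (f := id) hx) hbound
  · refine (s (F.max' hF + 1)).2.2 (hsum _ F (fun k hk => ?_) hF i)
    exact Finset.mem_range.2 (Nat.lt_succ_of_le (F.le_max' k hk))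

theorem exists_add_sum_mem_starSet {p : Ultrafilter ℕ} (hp : uadd p p = p) (hpK : p ∈ KSet ℕ)
    {C : Set ℕ} (hC : C ∈ p) {κ : Type*} [Finite κ] (y : κ → ℕ → ℤ) (m : ℕ) {G : Set ℤ}
    (hGf : G.Finite) (hGC : G ⊆ (↑) '' starSet p C) :
    ∃ (a : ℕ) (H : Finset ℕ), H.Nonempty ∧ (∀ t ∈ H, m < t) ∧
      ∀ i, (a + ∑ t ∈ H, y i t) ∈ ((↑) '' starSet p C : Set ℤ) ∧
        ∀ g ∈ G, g + (a + ∑ t ∈ H, y i t) ∈ ((↑) '' starSet p C : Set ℤ) := by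
  have hB : starSet p C ∩ ⋂ g ∈ G, {k : ℕ | g + k ∈ ((↑) '' starSet p C : Set ℤ)} ∈ p := by
    refine Filter.inter_mem (starSet_mem hp hC) ((Filter.biInter_mem hGf).2 fun g hg => ?_)
    obtain ⟨n, hn, rfl⟩ := hGC hg
    exact Filter.mem_of_superset (preimage_add_starSet_mem hp hn) fun k hk =>
      ⟨n + k, hk, Nat.cast_add n k⟩
  obtain ⟨a, H, hH, hm, hc⟩ := (isPiecewiseSyndetic_of_mem_KSet hpK hB).exists_add_sum_mem y m
  refine ⟨a, H, hH, hm, fun i => ?_⟩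
  obtain ⟨c, ⟨hcC, hcG⟩, hc⟩ := hc i
  rw [← hc]
  exact ⟨⟨c, hcC, rfl⟩, Set.mem_iInter₂.1 hcG⟩

end TotalSG

open TotalSG in
theorem original_central_sets_theorem_general (l : ℕ) (y : Fin l → ℕ → ℤ)
    (C : Set ℕ) (hC : IsCentral C) :
    ∃ (a : ℕ → ℕ) (H : ℕ → Finset ℕ),
      (∀ n, (H n).Nonempty) ∧
      (∀ n, ∀ x ∈ H n, ∀ x' ∈ H (n + 1), x < x') ∧
      ∀ F : Finset ℕ, F.Nonempty → ∀ i : Fin l,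
        ∃ c ∈ C, (c : ℤ) = ∑ n ∈ F, ((a n : ℤ) + ∑ t ∈ H n, y i t) := by
  obtain ⟨p, hpp, hpK, hCp⟩ := hC
  obtain ⟨a, H, hne, hlt, hsum⟩ := exists_seq_forall_sum_mem (S := (↑) '' starSet p C)
    (fun (a : ℕ) H i => (a : ℤ) + ∑ t ∈ H, y i t)
    fun m _ hGf hGC => exists_add_sum_mem_starSet hpp hpK hCp y m hGf hGC
  refine ⟨a, H, hne, hlt, fun F hF i => ?_⟩
  obtain ⟨c, hc, hceq⟩ := hsum F hF i
  exact ⟨c, hc.1, hceq⟩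

open TotalSG in
/-- The Original Central Sets Theorem (Furstenberg). -/
theorem original_central_sets_theorem (l : ℕ) (hl : 0 < l) (y : Fin l → ℕ → ℤ)
    (C : Set ℕ) (hC : IsCentral C) :
    ∃ (a : ℕ → ℕ) (H : ℕ → Finset ℕ),
      (∀ n, (H n).Nonempty) ∧
      (∀ n, ∀ x ∈ H n, ∀ x' ∈ H (n + 1), x < x') ∧
      ∀ F : Finset ℕ, F.Nonempty → ∀ i : Fin l,
        ∃ c ∈ C, (c : ℤ) = ∑ n ∈ F, ((a n : ℤ) + ∑ t ∈ H n, y i t) :=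
  original_central_sets_theorem_general l y C hC
end
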